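/- arXiv:2008.13572 — 9 statements merged into one kernel-verified Lean document; each statement's English description precedes it below -/
import Mathlib

section
/- For every real t with -π/2 < t < π/2, F(1/3, 2/3; 1/2; sin²t) = cos(t/3) / cos(t). -/
open Real

/-- The Gauss hypergeometric series `F(a,b;c;x) = ∑ (a)_n (b)_n / ((c)_n n!) xⁿ`. -/
noncomputable def hyperF (a b c x : ℝ) : ℝ :=
  ∑' n : ℕ, ((ascPochhammer ℝ n).eval a * (ascPochhammer ℝ n).eval b /
    ((ascPochhammer ℝ n).eval c * (n.factorial : ℝ))) * x ^ n

namespace HypAux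

open Set Filter

/-- coefficients of the series -/
noncomputable def c (n : ℕ) : ℝ :=
  (ascPochhammer ℝ n).eval (1/3) * (ascPochhammer ℝ n).eval (2/3) /
    ((ascPochhammer ℝ n).eval (1/2) * (n.factorial : ℝ))

lemma c_zero : c 0 = 1 := by simp [c]

lemma c_pos (n : ℕ) : 0 < c n := by
  apply div_pos
  · exact mul_pos (ascPochhammer_pos n _ (by norm_num)) (ascPochhammer_pos n _ (by norm_num))
  · exact mul_pos (ascPochhammer_pos n _ (by norm_num))
      (by exact_mod_cast Nat.factorial_pos n)

lemma c_rec (n : ℕ) :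
    c (n+1) * (((n:ℝ) + 1/2) * ((n:ℝ) + 1)) = c n * (((n:ℝ) + 1/3) * ((n:ℝ) + 2/3)) := by
  have h12 : (0:ℝ) < (ascPochhammer ℝ n).eval (1/2) := ascPochhammer_pos n _ (by norm_num)
  have hf : (0:ℝ) < (n.factorial : ℝ) := by exact_mod_cast Nat.factorial_pos n
  unfold c
  rw [ascPochhammer_succ_eval, ascPochhammer_succ_eval, ascPochhammer_succ_eval,
    Nat.factorial_succ]
  push_cast
  field_simp
  ring

lemma c_le_one (n : ℕ) : c n ≤ 1 := by
  induction n with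
  | zero => simp [c_zero]
  | succ n ih =>
    have h := c_rec n
    have h1 : (0:ℝ) < ((n:ℝ) + 1/2) * ((n:ℝ) + 1) := by positivity
    have h2 : c n * (((n:ℝ) + 1/3) * ((n:ℝ) + 2/3)) ≤ c n * (((n:ℝ) + 1/2) * ((n:ℝ) + 1)) := by
      have := (c_pos n).le
      nlinarith
    nlinarith [c_pos n]


noncomputable def gf (n : ℕ) (z : ℝ) : ℝ := c n * sin z ^ (2*n)
noncomputable def df (n : ℕ) (z : ℝ) : ℝ := c n * (((2*n : ℕ) : ℝ) * sin z ^ (2*n-1) * cos z)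
noncomputable def ef (n : ℕ) (z : ℝ) : ℝ :=
  c n * (((2*n : ℕ) : ℝ) * (((2*n-1 : ℕ) : ℝ) * sin z ^ (2*n-1-1) * cos z) * cos z +
    ((2*n : ℕ) : ℝ) * sin z ^ (2*n-1) * -sin z)

lemma abs_c_le (n : ℕ) : |c n| ≤ 1 := by rw [abs_of_pos (c_pos n)]; exact c_le_one n

lemma gf_bound {s : ℝ} {n : ℕ} {y : ℝ} (hy : |sin y| ≤ s) :
    ‖gf n y‖ ≤ (s^2)^n := by
  have h : ‖gf n y‖ = |c n| * |sin y| ^ (2*n) := by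
    rw [Real.norm_eq_abs, gf, abs_mul, abs_pow]
  rw [h, ← pow_mul]
  calc |c n| * |sin y| ^ (2*n)
      ≤ 1 * s ^ (2*n) :=
        mul_le_mul (abs_c_le n) (pow_le_pow_left₀ (abs_nonneg _) hy _) (by positivity) zero_le_one
    _ = s ^ (2*n) := one_mul _

lemma df_bound {s : ℝ} {n : ℕ} {y : ℝ} (hy : |sin y| ≤ s) :
    ‖df n y‖ ≤ 2 * n * s^(2*n-1) := by
  have h : ‖df n y‖ = |c n| * (((2*n : ℕ) : ℝ) * |sin y| ^ (2*n-1) * |cos y|) := by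
    rw [Real.norm_eq_abs, df, abs_mul, abs_mul, abs_mul, abs_pow, Nat.abs_cast]
  rw [h]
  have hs0 : 0 ≤ s := le_trans (abs_nonneg _) hy
  have inner : ((2*n : ℕ) : ℝ) * |sin y| ^ (2*n-1) * |cos y|
      ≤ ((2*n : ℕ) : ℝ) * s ^ (2*n-1) * 1 := by
    apply mul_le_mul ?_ (abs_cos_le_one y) (abs_nonneg _) (by positivity)
    exact mul_le_mul_of_nonneg_left (pow_le_pow_left₀ (abs_nonneg _) hy _) (by positivity)
  calc |c n| * (((2*n : ℕ) : ℝ) * |sin y| ^ (2*n-1) * |cos y|)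
      ≤ 1 * (((2*n : ℕ) : ℝ) * s ^ (2*n-1) * 1) :=
        mul_le_mul (abs_c_le n) inner (by positivity) zero_le_one
    _ = 2 * n * s^(2*n-1) := by push_cast; ring

lemma ef_bound {s : ℝ} {n : ℕ} {y : ℝ} (hy : |sin y| ≤ s) (hs1 : s ≤ 1) :
    ‖ef n y‖ ≤ 2*n * (2*n) * s^(2*n-1-1) + 2*n * s^(2*n-1-1) := by
  have hs0 : 0 ≤ s := le_trans (abs_nonneg _) hy
  have habs : |sin y| ≤ 1 := le_trans hy hs1
  have h1 : |sin y ^ (2*n-1) * -sin y| ≤ s ^ (2*n-1-1) := by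
    rw [abs_mul, abs_neg, abs_pow]
    rcases n with _ | m
    · simpa using habs
    · have h2 : 2*(m+1)-1 = (2*(m+1)-1-1) + 1 := by omega
      rw [h2, pow_succ]
      calc |sin y| ^ (2*(m+1)-1-1) * |sin y| * |sin y|
          ≤ s ^ (2*(m+1)-1-1) * 1 * 1 :=
            mul_le_mul (mul_le_mul (pow_le_pow_left₀ (abs_nonneg _) hy _) habs
              (abs_nonneg _) (by positivity)) habs (abs_nonneg _) (by positivity)
        _ = s ^ (2*(m+1)-1-1) := by ring
  have h2 : |((2*n : ℕ) : ℝ) * (((2*n-1 : ℕ) : ℝ) * sin y ^ (2*n-1-1) * cos y) * cos y|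
      ≤ ((2*n : ℕ) : ℝ) * (((2*n : ℕ) : ℝ) * s ^ (2*n-1-1) * 1) * 1 := by
    rw [abs_mul, abs_mul, abs_mul, abs_mul, abs_pow, Nat.abs_cast, Nat.abs_cast]
    apply mul_le_mul ?_ (abs_cos_le_one y) (abs_nonneg _) (by positivity)
    apply mul_le_mul_of_nonneg_left ?_ (by positivity)
    apply mul_le_mul ?_ (abs_cos_le_one y) (abs_nonneg _) (by positivity)
    apply mul_le_mul ?_ (pow_le_pow_left₀ (abs_nonneg _) hy _) (by positivity) (by positivity)
    exact_mod_cast Nat.cast_le.mpr (Nat.sub_le (2*n) 1)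
  have h : ‖ef n y‖ ≤ |c n| * ((((2*n : ℕ) : ℝ) * (((2*n : ℕ) : ℝ) * s ^ (2*n-1-1) * 1) * 1) +
      ((2*n : ℕ) : ℝ) * s ^ (2*n-1-1)) := by
    rw [Real.norm_eq_abs, ef, abs_mul]
    apply mul_le_mul_of_nonneg_left ?_ (abs_nonneg _)
    refine le_trans (abs_add_le _ _) (add_le_add h2 ?_)
    have hre : ((2*n : ℕ) : ℝ) * sin y ^ (2*n-1) * -sin y
        = ((2*n : ℕ) : ℝ) * (sin y ^ (2*n-1) * -sin y) := by ring
    rw [hre, abs_mul, Nat.abs_cast]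
    exact mul_le_mul_of_nonneg_left h1 (by positivity)
  refine le_trans h ?_
  calc |c n| * ((((2*n : ℕ) : ℝ) * (((2*n : ℕ) : ℝ) * s ^ (2*n-1-1) * 1) * 1) +
      ((2*n : ℕ) : ℝ) * s ^ (2*n-1-1))
      ≤ 1 * ((((2*n : ℕ) : ℝ) * (((2*n : ℕ) : ℝ) * s ^ (2*n-1-1) * 1) * 1) +
        ((2*n : ℕ) : ℝ) * s ^ (2*n-1-1)) :=
        mul_le_mul_of_nonneg_right (abs_c_le n) (by positivity)
    _ = 2*n * (2*n) * s^(2*n-1-1) + 2*n * s^(2*n-1-1) := by push_cast; ring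

lemma hasDerivAt_gf (n : ℕ) (y : ℝ) : HasDerivAt (gf n) (df n y) y := by
  exact ((Real.hasDerivAt_sin y).pow (2*n)).const_mul (c n)

lemma hasDerivAt_df (n : ℕ) (y : ℝ) : HasDerivAt (df n) (ef n y) y := by
  exact ((((Real.hasDerivAt_sin y).pow (2*n-1)).const_mul (((2*n : ℕ) : ℝ))).mul
    (Real.hasDerivAt_cos y)).const_mul (c n)


lemma summable_dbound {s : ℝ} (hs0 : 0 < s) (hs1 : s < 1) :
    Summable (fun n : ℕ => 2 * (n:ℝ) * s^(2*n-1)) := by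
  have hs2 : ‖s^2‖ < 1 := by
    rw [Real.norm_eq_abs, abs_of_nonneg (by positivity)]
    nlinarith
  have h := (summable_pow_mul_geometric_of_norm_lt_one 1 hs2).mul_left (2 / s)
  apply h.of_nonneg_of_le (fun n => by positivity)
  intro n
  rcases n with _ | m
  · simp
  · have he : 2*(m+1)-1 = 2*m+1 := by omega
    rw [he]
    apply le_of_eq
    have hp : (s^2)^(m+1) = s^(2*m+1) * s := by
      rw [← pow_mul, show 2*(m+1) = (2*m+1)+1 by ring, pow_succ]
    rw [hp]
    push_cast
    field_simp

lemma summable_ebound {s : ℝ} (hs0 : 0 < s) (hs1 : s < 1) :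
    Summable (fun n : ℕ => 2*(n:ℝ) * (2*(n:ℝ)) * s^(2*n-1-1) + 2*(n:ℝ) * s^(2*n-1-1)) := by
  have hs2 : ‖s^2‖ < 1 := by
    rw [Real.norm_eq_abs, abs_of_nonneg (by positivity)]
    nlinarith
  have h2 := (summable_pow_mul_geometric_of_norm_lt_one 2 hs2).mul_left (4 / s^2)
  have h1 := (summable_pow_mul_geometric_of_norm_lt_one 1 hs2).mul_left (2 / s^2)
  apply (h2.add h1).of_nonneg_of_le (fun n => by positivity)
  intro n
  rcases n with _ | m
  · simp
  · have he : 2*(m+1)-1-1 = 2*m := by omega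
    rw [he]
    have hp : (s^2)^(m+1) = s^(2*m) * s^2 := by
      rw [← pow_mul, show 2*(m+1) = (2*m)+2 by ring, pow_add]
    have e2 : (4:ℝ) / s^2 * (((m+1:ℕ):ℝ)^2 * (s^2)^(m+1)) = 4*((m+1:ℕ):ℝ)^2 * s^(2*m) := by
      rw [hp]; field_simp
    have e1 : (2:ℝ) / s^2 * (((m+1:ℕ):ℝ)^1 * (s^2)^(m+1)) = 2*((m+1:ℕ):ℝ) * s^(2*m) := by
      rw [hp]; field_simp
    rw [e2, e1]
    push_cast
    nlinarith [pow_pos hs0 (2*m), pow_nonneg hs0.le (2*m), sq_nonneg ((m:ℝ))]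

lemma key_structure {τ : ℝ} (hτ : τ ∈ Ioo (-(π/2)) (π/2)) :
    Summable (fun n => gf n τ) ∧ Summable (fun n => df n τ) ∧ Summable (fun n => ef n τ) ∧
    HasDerivAt (fun z => ∑' n, gf n z) (∑' n, df n τ) τ ∧
    HasDerivAt (fun z => ∑' n, df n z) (∑' n, ef n τ) τ := by
  obtain ⟨hτ1, hτ2⟩ := hτ
  have hπ : (0:ℝ) < π/2 := by positivity
  have habs : |τ| < π/2 := abs_lt.2 ⟨hτ1, hτ2⟩
  set r : ℝ := (|τ| + π/2)/2 with hr
  have hτr : |τ| < r := by rw [hr]; linarith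
  have hr0 : 0 < r := lt_of_le_of_lt (abs_nonneg τ) hτr
  have hrπ : r < π/2 := by rw [hr]; linarith
  set s : ℝ := sin r with hs
  have hs0 : 0 < s := sin_pos_of_pos_of_lt_pi hr0 (by linarith [pi_pos])
  have hs1 : s < 1 := by
    have h := strictMonoOn_sin (a := r) (b := π/2)
      ⟨by linarith, by linarith⟩ ⟨by linarith, le_refl _⟩ hrπ
    rwa [sin_pi_div_two] at h
  -- pointwise |sin y| ≤ s on Ioo (-r) r
  have hsin_le : ∀ y ∈ Ioo (-r) r, |sin y| ≤ s := by
    intro y hy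
    obtain ⟨hy1, hy2⟩ := hy
    rw [abs_le]
    constructor
    · have : sin (-r) ≤ sin y :=
        sin_le_sin_of_le_of_le_pi_div_two (by linarith) (by linarith) (by linarith)
      rwa [sin_neg] at this
    · exact sin_le_sin_of_le_of_le_pi_div_two (by linarith) (by linarith) (by linarith)
  have hτmem : τ ∈ Ioo (-r) r := abs_lt.1 hτr
  have hopen : IsOpen (Ioo (-r) r) := isOpen_Ioo
  have hconn : IsPreconnected (Ioo (-r) r) := isPreconnected_Ioo
  -- summability at τ
  have hsum_g : Summable (fun n => gf n τ) := by
    apply Summable.of_norm_bounded (summable_geometric_of_lt_one (by positivity)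
      (by nlinarith)) (fun n => gf_bound (hsin_le τ hτmem))
  have hsum_d : Summable (fun n => df n τ) := by
    apply Summable.of_norm_bounded (summable_dbound hs0 hs1)
      (fun n => df_bound (hsin_le τ hτmem))
  have hsum_e : Summable (fun n => ef n τ) := by
    apply Summable.of_norm_bounded (summable_ebound hs0 hs1)
      (fun n => ef_bound (hsin_le τ hτmem) hs1.le)
  refine ⟨hsum_g, hsum_d, hsum_e, ?_, ?_⟩
  · exact hasDerivAt_tsum_of_isPreconnected (summable_dbound hs0 hs1) hopen hconn
      (fun n y _ => hasDerivAt_gf n y) (fun n y hy => df_bound (hsin_le y hy))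
      hτmem hsum_g hτmem
  · exact hasDerivAt_tsum_of_isPreconnected (summable_ebound hs0 hs1) hopen hconn
      (fun n y _ => hasDerivAt_df n y) (fun n y hy => ef_bound (hsin_le y hy) hs1.le)
      hτmem hsum_d hτmem

noncomputable def A (n : ℕ) (z : ℝ) : ℝ :=
  ((2*n : ℕ) : ℝ) * ((2*n-1 : ℕ) : ℝ) * c n * sin z ^ (2*n-1-1)

lemma key_id (n : ℕ) (τ : ℝ) :
    cos τ * ef n τ = 2 * sin τ * df n τ + (8/9) * (cos τ * gf n τ) +
      cos τ * (A n τ - A (n+1) τ) := by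
  rcases n with _ | m
  · have h := c_rec 0
    simp only [gf, df, ef, A] at *
    norm_num
    linear_combination (4*cos τ) * h
  · have hrec := c_rec (m+1)
    simp only [gf, df, ef, A]
    have e1 : 2*(m+1) = 2*m+2 := by omega
    have e2 : 2*(m+1)-1 = 2*m+1 := by omega
    have e3 : 2*(m+1)-1-1 = 2*m := by omega
    have e4 : 2*(m+2) = 2*m+4 := by omega
    have e5 : 2*(m+2)-1 = 2*m+3 := by omega
    have e6 : 2*(m+2)-1-1 = 2*m+2 := by omega
    simp only [e1, e2, e3, show m+1+1 = m+2 from rfl, e4, e5, e6,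
      show 2*m+2-1 = 2*m+1 from by omega, show 2*m+2-1-1 = 2*m from by omega,
      show 2*m+4-1 = 2*m+3 from by omega, show 2*m+4-1-1 = 2*m+2 from by omega,
      show 2*m+1-1 = 2*m from by omega]
    push_cast [Nat.cast_add, Nat.cast_mul] at hrec ⊢
    have hpy := sin_sq_add_cos_sq τ
    linear_combination (4 * cos τ * sin τ^(2*m+2)) * hrec +
      (cos τ * c (m+1) * (2*(m:ℝ)+2) * (2*(m:ℝ)+1) * sin τ^(2*m)) * hpy

lemma summable_A {τ : ℝ} (hτ : |sin τ| < 1) : Summable (fun n => A n τ) := by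
  set s : ℝ := (|sin τ| + 1)/2 with hs
  have hs0 : 0 < s := by rw [hs]; positivity
  have hs1 : s < 1 := by rw [hs]; linarith
  have hsle : |sin τ| ≤ s := by rw [hs]; linarith [abs_nonneg (sin τ)]
  apply Summable.of_norm_bounded (summable_ebound hs0 hs1)
  intro n
  have h : ‖A n τ‖ = ((2*n : ℕ) : ℝ) * ((2*n-1 : ℕ) : ℝ) * |c n| * |sin τ| ^ (2*n-1-1) := by
    rw [Real.norm_eq_abs, A, abs_mul, abs_mul, abs_mul, abs_pow, Nat.abs_cast, Nat.abs_cast]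
  rw [h]
  have hineq : ((2*n : ℕ) : ℝ) * ((2*n-1 : ℕ) : ℝ) * |c n| * |sin τ| ^ (2*n-1-1)
      ≤ (2*(n:ℝ)) * (2*(n:ℝ)) * s^(2*n-1-1) := by
    have h1 : ((2*n : ℕ) : ℝ) * ((2*n-1 : ℕ) : ℝ) * |c n| ≤ (2*(n:ℝ)) * (2*(n:ℝ)) := by
      have hc : |c n| ≤ 1 := by
        rw [abs_of_pos (c_pos n)]; exact c_le_one n
      calc ((2*n : ℕ) : ℝ) * ((2*n-1 : ℕ) : ℝ) * |c n|
          ≤ ((2*n : ℕ) : ℝ) * ((2*n : ℕ) : ℝ) * 1 := by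
            apply mul_le_mul ?_ hc (abs_nonneg _) (by positivity)
            apply mul_le_mul_of_nonneg_left ?_ (by positivity)
            exact_mod_cast Nat.cast_le.mpr (Nat.sub_le (2*n) 1)
        _ = (2*(n:ℝ)) * (2*(n:ℝ)) := by push_cast; ring
    calc ((2*n : ℕ) : ℝ) * ((2*n-1 : ℕ) : ℝ) * |c n| * |sin τ| ^ (2*n-1-1)
        ≤ ((2*(n:ℝ)) * (2*(n:ℝ))) * s ^ (2*n-1-1) :=
          mul_le_mul h1 (pow_le_pow_left₀ (abs_nonneg _) hsle _) (by positivity) (by positivity)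
      _ = (2*(n:ℝ)) * (2*(n:ℝ)) * s^(2*n-1-1) := by ring
  refine le_trans hineq ?_
  nlinarith [pow_nonneg hs0.le (2*n-1-1), Nat.cast_nonneg (α := ℝ) n]

lemma ode_tsum {τ : ℝ} (hτ : |sin τ| < 1)
    (hg : Summable (fun n => gf n τ)) (hd : Summable (fun n => df n τ))
    (he : Summable (fun n => ef n τ)) :
    cos τ * (∑' n, ef n τ) =
      2 * sin τ * (∑' n, df n τ) + (8/9) * (cos τ * (∑' n, gf n τ)) := by
  have hA := summable_A hτ
  have hA0 : Tendsto (fun n => A n τ) atTop (nhds 0) := hA.tendsto_atTop_zero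
  set E : ℕ → ℝ := fun n => cos τ * ef n τ -
    (2 * sin τ * df n τ + (8/9) * (cos τ * gf n τ)) with hE
  have hEsum : Summable E := by
    apply Summable.sub (he.mul_left (cos τ))
    exact Summable.add (hd.mul_left (2 * sin τ)) ((hg.mul_left (cos τ)).mul_left (8/9))
  have hB : ∀ n, E n = cos τ * A n τ - cos τ * A (n+1) τ := by
    intro n
    rw [hE]
    have := key_id n τ
    simp only []
    linarith [key_id n τ]
  have hA0' : A 0 τ = 0 := by simp [A]
  have hhs : HasSum E 0 := by
    rw [hEsum.hasSum_iff_tendsto_nat]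
    have hps : ∀ k, ∑ i ∈ Finset.range k, E i = cos τ * A 0 τ - cos τ * A k τ := by
      intro k
      calc ∑ i ∈ Finset.range k, E i
          = ∑ i ∈ Finset.range k, ((fun j => cos τ * A j τ) i - (fun j => cos τ * A j τ) (i+1)) :=
            Finset.sum_congr rfl (fun i _ => hB i)
        _ = cos τ * A 0 τ - cos τ * A k τ := Finset.sum_range_sub' _ _
    simp only [hps, hA0', mul_zero, zero_sub]
    have : Tendsto (fun k => cos τ * A k τ) atTop (nhds 0) := by
      simpa using hA0.const_mul (cos τ)
    simpa using this.neg
  have h0 : (∑' n, E n) = 0 := hhs.tsum_eq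
  have hsplit : (∑' n, E n) = cos τ * (∑' n, ef n τ) -
      (2 * sin τ * (∑' n, df n τ) + (8/9) * (cos τ * (∑' n, gf n τ))) := by
    rw [hE]
    rw [Summable.tsum_sub (he.mul_left (cos τ))
      (Summable.add (hd.mul_left (2 * sin τ)) ((hg.mul_left (cos τ)).mul_left (8/9)))]
    rw [Summable.tsum_add (hd.mul_left (2 * sin τ)) ((hg.mul_left (cos τ)).mul_left (8/9))]
    rw [tsum_mul_left, tsum_mul_left, tsum_mul_left, tsum_mul_left]
  rw [hsplit] at h0
  linarith

noncomputable def Sf (z : ℝ) : ℝ := ∑' n, gf n z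
noncomputable def S1 (z : ℝ) : ℝ := ∑' n, df n z
noncomputable def eF (z : ℝ) : ℝ := Sf z * cos z - cos (z/3)
noncomputable def h1 (z : ℝ) : ℝ := S1 z * cos z - Sf z * sin z + (1/3) * sin (z/3)
noncomputable def L (z : ℝ) : ℝ := 9 * (h1 z)^2 + (eF z)^2

lemma sin_abs_lt {τ : ℝ} (hτ : τ ∈ Ioo (-(π/2)) (π/2)) : |sin τ| < 1 := by
  obtain ⟨h1, h2⟩ := hτ
  rw [abs_lt]
  constructor
  · have := sin_lt_sin_of_lt_of_le_pi_div_two (x := -(π/2)) (by linarith) (by linarith) h1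
    rw [sin_neg, sin_pi_div_two] at this
    linarith
  · have := sin_lt_sin_of_lt_of_le_pi_div_two (x := τ) (by linarith) (le_refl _) h2
    rwa [sin_pi_div_two] at this

lemma hasDerivAt_cos3 (τ : ℝ) : HasDerivAt (fun z => cos (z/3)) (-(1/3) * sin (τ/3)) τ := by
  have h := (Real.hasDerivAt_cos (τ/3)).comp τ ((hasDerivAt_id τ).div_const 3)
  refine h.congr_deriv ?_
  ring

lemma hasDerivAt_sin3 (τ : ℝ) : HasDerivAt (fun z => sin (z/3)) ((1/3) * cos (τ/3)) τ := by
  have h := (Real.hasDerivAt_sin (τ/3)).comp τ ((hasDerivAt_id τ).div_const 3)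
  refine h.congr_deriv ?_
  ring

lemma hasDerivAt_eF {τ : ℝ} (hτ : τ ∈ Ioo (-(π/2)) (π/2)) : HasDerivAt eF (h1 τ) τ := by
  obtain ⟨hg, hd, he, hD1, hD2⟩ := key_structure hτ
  have h := (hD1.mul (Real.hasDerivAt_cos τ)).sub (hasDerivAt_cos3 τ)
  refine h.congr_deriv ?_
  simp only [h1, S1, Sf]
  ring

lemma hasDerivAt_h1 {τ : ℝ} (hτ : τ ∈ Ioo (-(π/2)) (π/2)) :
    HasDerivAt h1 (-(1/9) * eF τ) τ := by
  obtain ⟨hg, hd, he, hD1, hD2⟩ := key_structure hτ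
  have h := ((hD2.mul (Real.hasDerivAt_cos τ)).sub
    (hD1.mul (Real.hasDerivAt_sin τ))).add ((hasDerivAt_sin3 τ).const_mul (1/3))
  have hode := ode_tsum (sin_abs_lt hτ) hg hd he
  refine h.congr_deriv ?_
  simp only [eF, Sf, S1]
  nlinarith [hode]

lemma hasDerivAt_L {τ : ℝ} (hτ : τ ∈ Ioo (-(π/2)) (π/2)) : HasDerivAt L 0 τ := by
  have h := (((hasDerivAt_h1 hτ).pow 2).const_mul (9:ℝ)).add ((hasDerivAt_eF hτ).pow 2)
  refine h.congr_deriv ?_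
  push_cast
  ring

lemma Sf_zero : Sf 0 = 1 := by
  rw [Sf]
  rw [tsum_eq_single 0]
  · simp [gf, c_zero]
  · intro n hn
    simp [gf, sin_zero, zero_pow (by omega : 2*n ≠ 0)]

lemma S1_zero : S1 0 = 0 := by
  rw [S1]
  have : ∀ n : ℕ, df n 0 = 0 := by
    intro n
    rcases n with _ | m
    · simp [df]
    · simp [df, sin_zero, zero_pow (by omega : 2*(m+1)-1 ≠ 0)]
  simp only [this]
  exact tsum_zero

lemma L_zero : L 0 = 0 := by
  have h1z : h1 0 = 0 := by
    simp [h1, S1_zero, Sf_zero]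
  have hez : eF 0 = 0 := by
    simp [eF, Sf_zero]
  simp [L, h1z, hez]

lemma L_eq_zero {t : ℝ} (ht₁ : -(π/2) < t) (ht₂ : t < π/2) : L t = 0 := by
  rcases le_or_gt 0 t with h | h
  · have key := constant_of_has_deriv_right_zero (f := L) (a := 0) (b := t)
      (fun x hx => ((hasDerivAt_L ⟨by nlinarith [pi_pos, hx.1],
        lt_of_le_of_lt hx.2 ht₂⟩).continuousAt).continuousWithinAt)
      (fun x hx => ((hasDerivAt_L ⟨by nlinarith [pi_pos, hx.1],
        lt_trans hx.2 ht₂⟩).hasDerivWithinAt))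
      t ⟨h, le_refl t⟩
    rw [key]
    exact L_zero
  · have key := constant_of_has_deriv_right_zero (f := L) (a := t) (b := 0)
      (fun x hx => ((hasDerivAt_L ⟨lt_of_lt_of_le ht₁ hx.1,
        by nlinarith [pi_pos, hx.2]⟩).continuousAt).continuousWithinAt)
      (fun x hx => ((hasDerivAt_L ⟨lt_of_lt_of_le ht₁ hx.1,
        by nlinarith [pi_pos, hx.2.le]⟩).hasDerivWithinAt))
      0 ⟨h.le, le_refl 0⟩
    rw [L_zero] at key
    exact key.symm

lemma main {t : ℝ} (ht₁ : -(π/2) < t) (ht₂ : t < π/2) : Sf t = cos (t/3) / cos t := by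
  have hL := L_eq_zero ht₁ ht₂
  have heF : eF t = 0 := by
    have h1 := sq_nonneg (h1 t)
    have h2 := sq_nonneg (eF t)
    have : eF t ^ 2 = 0 := by simp only [L] at hL; nlinarith
    exact pow_eq_zero_iff (by norm_num) |>.mp this
  have hcos : cos t ≠ 0 := (cos_pos_of_mem_Ioo ⟨ht₁, ht₂⟩).ne'
  rw [eq_div_iff hcos]
  simp only [eF] at heF
  linarith

end HypAux

theorem stmt_0 (t : ℝ) (ht₁ : -(π / 2) < t) (ht₂ : t < π / 2) :
    hyperF (1/3) (2/3) (1/2) (sin t ^ 2) = cos (t / 3) / cos t := by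
  have hmain := HypAux.main ht₁ ht₂
  have heq : hyperF (1/3) (2/3) (1/2) (sin t ^ 2) = HypAux.Sf t := by
    simp only [hyperF, HypAux.Sf]
    apply tsum_congr
    intro n
    rw [HypAux.gf, HypAux.c, pow_mul]
  rw [heq, hmain]
end

section
/- Let κ ∈ (0,1) and let φ : ℝ → ℝ be differentiable with φ(0) = 0 and (deriv φ u) · F(1/3, 2/3; 1/2; κ² sin²(φ u)) = 1 for all real u. Then for all real u, 4(1 − κ² sin²(φ u)) = (deriv φ u)³ + 3 (deriv φ u)². -/
open Real

noncomputable def aa (n : ℕ) : ℝ :=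
  (ascPochhammer ℝ n).eval (1/3) * (ascPochhammer ℝ n).eval (2/3) /
    ((ascPochhammer ℝ n).eval (1/2) * (n.factorial : ℝ))

lemma poch_pos {x : ℝ} (hx : 0 < x) (n : ℕ) : 0 < (ascPochhammer ℝ n).eval x := by
  induction n with
  | zero => simp
  | succ k ih =>
    rw [ascPochhammer_succ_eval]
    positivity

lemma aa_zero : aa 0 = 1 := by simp [aa]

lemma aa_pos (n : ℕ) : 0 < aa n := by
  have h1 := poch_pos (by norm_num : (0:ℝ) < 1/3) n
  have h2 := poch_pos (by norm_num : (0:ℝ) < 2/3) n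
  have h3 := poch_pos (by norm_num : (0:ℝ) < 1/2) n
  have h4 : (0:ℝ) < n.factorial := by positivity
  exact div_pos (mul_pos h1 h2) (mul_pos h3 h4)

lemma aa_rec (n : ℕ) :
    aa (n+1) * ((n+1) * ((n:ℝ) + 1/2)) = aa n * (((n:ℝ) + 1/3) * ((n:ℝ) + 2/3)) := by
  have h3 := poch_pos (by norm_num : (0:ℝ) < 1/2) n
  have h4 : (0:ℝ) < n.factorial := by positivity
  unfold aa
  rw [ascPochhammer_succ_eval, ascPochhammer_succ_eval, ascPochhammer_succ_eval,
    Nat.factorial_succ]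
  push_cast
  field_simp
  ring

lemma aa_le_one (n : ℕ) : aa n ≤ 1 := by
  induction n with
  | zero => simp [aa]
  | succ k ih =>
    have hrec := aa_rec k
    have hk : 0 < aa k := aa_pos k
    have h1 : (0:ℝ) < (k+1) * ((k:ℝ) + 1/2) := by positivity
    have h2 : ((k:ℝ) + 1/3) * ((k:ℝ) + 2/3) ≤ (k+1) * ((k:ℝ) + 1/2) := by nlinarith [Nat.cast_nonneg (α := ℝ) k]
    nlinarith [aa_pos (k+1)]

lemma summable_master {r : ℝ} (hr0 : 0 ≤ r) (hr : r < 1) :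
    Summable (fun n : ℕ => ((n:ℝ)^2 + 1) * r^(n-2)) := by
  rw [← summable_nat_add_iff 2]
  have hr' : ‖r‖ < 1 := by rwa [Real.norm_eq_abs, abs_of_nonneg hr0]
  have h2 := summable_pow_mul_geometric_of_norm_lt_one 2 hr'
  have h1 := summable_pow_mul_geometric_of_norm_lt_one 1 hr'
  have h0 := summable_geometric_of_lt_one hr0 hr
  have hsum := (h2.add (h1.mul_left 4)).add (h0.mul_left 5)
  convert hsum using 2 with n
  · rfl
  have hn : n + 2 - 2 = n := by omega
  rw [hn]; push_cast; ring

lemma abs_pow_le {y r : ℝ} (h : |y| ≤ r) (m : ℕ) : |y ^ m| ≤ r ^ m := by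
  rw [abs_pow]; exact pow_le_pow_left₀ (abs_nonneg y) h m

lemma rpow_le {r : ℝ} (hr0 : 0 ≤ r) (hr : r ≤ 1) {m k : ℕ} (h : k ≤ m) :
    r ^ m ≤ r ^ k := pow_le_pow_of_le_one hr0 hr h

-- bounds for the three kinds of terms, for |y| ≤ r ≤ 1
lemma bound0 {y r : ℝ} (hy : |y| ≤ r) (hr : r ≤ 1) (n : ℕ) :
    ‖aa n * y ^ n‖ ≤ ((n:ℝ)^2 + 1) * r^(n-2) := by
  have hr0 : 0 ≤ r := le_trans (abs_nonneg y) hy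
  rw [Real.norm_eq_abs, abs_mul, abs_of_pos (aa_pos n)]
  have h1 : |y ^ n| ≤ r ^ (n-2) := le_trans (abs_pow_le hy n) (rpow_le hr0 hr (Nat.sub_le n 2))
  nlinarith [aa_pos n, aa_le_one n, abs_nonneg (y^n), Nat.cast_nonneg (α := ℝ) n,
    pow_nonneg hr0 (n-2)]

lemma bound1 {y r : ℝ} (hy : |y| ≤ r) (hr : r ≤ 1) (n : ℕ) :
    ‖aa n * ((n:ℝ) * y ^ (n-1))‖ ≤ ((n:ℝ)^2 + 1) * r^(n-2) := by
  have hr0 : 0 ≤ r := le_trans (abs_nonneg y) hy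
  rw [Real.norm_eq_abs, abs_mul, abs_of_pos (aa_pos n), abs_mul, Nat.abs_cast]
  have h1 : |y ^ (n-1)| ≤ r ^ (n-2) :=
    le_trans (abs_pow_le hy (n-1)) (rpow_le hr0 hr (by omega))
  have h4 : (n:ℝ) * |y ^ (n-1)| ≤ (n:ℝ) * r^(n-2) :=
    mul_le_mul_of_nonneg_left h1 (Nat.cast_nonneg n)
  have h5 : (n:ℝ) * r^(n-2) ≤ ((n:ℝ)^2 + 1) * r^(n-2) := by
    apply mul_le_mul_of_nonneg_right _ (pow_nonneg hr0 _)
    nlinarith [sq_nonneg ((n:ℝ) - 1)]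
  nlinarith [aa_pos n, aa_le_one n, abs_nonneg (y^(n-1)), Nat.cast_nonneg (α := ℝ) n,
    pow_nonneg hr0 (n-2), mul_nonneg (Nat.cast_nonneg (α := ℝ) n) (abs_nonneg (y^(n-1)))]

lemma bound2 {y r : ℝ} (hy : |y| ≤ r) (hr : r ≤ 1) (n : ℕ) :
    ‖aa n * ((n:ℝ) * (((n-1:ℕ):ℝ) * y ^ (n-2)))‖ ≤ (n:ℝ) * (((n:ℝ)^2 + 1) * r^(n-2)) := by
  have hr0 : 0 ≤ r := le_trans (abs_nonneg y) hy
  rw [Real.norm_eq_abs, abs_mul, abs_of_pos (aa_pos n), abs_mul, Nat.abs_cast, abs_mul,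
    Nat.abs_cast]
  have h1 : |y ^ (n-2)| ≤ r ^ (n-2) := abs_pow_le hy (n-2)
  have h2 : ((n-1:ℕ):ℝ) ≤ (n:ℝ) := Nat.cast_le.mpr (Nat.sub_le n 1)
  have h3 : (0:ℝ) ≤ ((n-1:ℕ):ℝ) := Nat.cast_nonneg _
  have h4 : ((n-1:ℕ):ℝ) * |y ^ (n-2)| ≤ (n:ℝ) * r^(n-2) :=
    mul_le_mul h2 h1 (abs_nonneg _) (Nat.cast_nonneg n)
  have h5 : (n:ℝ) * (((n-1:ℕ):ℝ) * |y ^ (n-2)|) ≤ (n:ℝ) * ((n:ℝ) * r^(n-2)) :=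
    mul_le_mul_of_nonneg_left h4 (Nat.cast_nonneg n)
  have h6 : (n:ℝ) * ((n:ℝ) * r^(n-2)) ≤ (n:ℝ) * (((n:ℝ)^2+1) * r^(n-2)) := by
    apply mul_le_mul_of_nonneg_left _ (Nat.cast_nonneg n)
    apply mul_le_mul_of_nonneg_right _ (pow_nonneg hr0 _)
    nlinarith [sq_nonneg ((n:ℝ) - 1)]
  have h7 : (0:ℝ) ≤ (n:ℝ) * (((n-1:ℕ):ℝ) * |y ^ (n-2)|) :=
    mul_nonneg (Nat.cast_nonneg n) (mul_nonneg h3 (abs_nonneg _))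
  nlinarith [aa_pos n, aa_le_one n]

lemma summable_master' {r : ℝ} (hr0 : 0 ≤ r) (hr : r < 1) :
    Summable (fun n : ℕ => (n:ℝ) * (((n:ℝ)^2 + 1) * r^(n-2))) := by
  rw [← summable_nat_add_iff 2]
  have hr' : ‖r‖ < 1 := by rwa [Real.norm_eq_abs, abs_of_nonneg hr0]
  have h3 := summable_pow_mul_geometric_of_norm_lt_one 3 hr'
  have h2 := summable_pow_mul_geometric_of_norm_lt_one 2 hr'
  have h1 := summable_pow_mul_geometric_of_norm_lt_one 1 hr'
  have h0 := summable_geometric_of_lt_one hr0 hr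
  have hsum := ((h3.add (h2.mul_left 6)).add (h1.mul_left 13)).add (h0.mul_left 10)
  convert hsum using 2 with n
  · rfl
  have hn : n + 2 - 2 = n := by omega
  rw [hn]; push_cast; ring

noncomputable def FF (x : ℝ) : ℝ := ∑' n : ℕ, aa n * x ^ n
noncomputable def F1 (x : ℝ) : ℝ := ∑' n : ℕ, aa n * ((n:ℝ) * x ^ (n-1))
noncomputable def F2 (x : ℝ) : ℝ := ∑' n : ℕ, aa n * ((n:ℝ) * (((n-1:ℕ):ℝ) * x ^ (n-2)))

lemma summable_FF {x : ℝ} (hx : |x| < 1) : Summable (fun n : ℕ => aa n * x ^ n) :=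
  Summable.of_norm_bounded (summable_master (abs_nonneg x) hx) (bound0 le_rfl hx.le)

lemma summable_F1 {x : ℝ} (hx : |x| < 1) :
    Summable (fun n : ℕ => aa n * ((n:ℝ) * x ^ (n-1))) :=
  Summable.of_norm_bounded (summable_master (abs_nonneg x) hx) (bound1 le_rfl hx.le)

lemma summable_F2 {x : ℝ} (hx : |x| < 1) :
    Summable (fun n : ℕ => aa n * ((n:ℝ) * (((n-1:ℕ):ℝ) * x ^ (n-2)))) :=
  Summable.of_norm_bounded (summable_master' (abs_nonneg x) hx) (bound2 le_rfl hx.le)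

lemma hasDerivAt_FF {x : ℝ} (hx : |x| < 1) : HasDerivAt FF (F1 x) x := by
  set r : ℝ := (|x| + 1) / 2 with hrdef
  have hr0 : 0 ≤ r := by positivity
  have hr1 : r < 1 := by rw [hrdef]; linarith
  have hxr : |x| < r := by rw [hrdef]; linarith
  exact hasDerivAt_tsum_of_isPreconnected
    (g := fun n y => aa n * y ^ n)
    (g' := fun n y => aa n * ((n:ℝ) * y ^ (n-1)))
    (summable_master hr0 hr1)
    (Metric.isOpen_ball (x := (0:ℝ)) (ε := r)) (convex_ball (0:ℝ) r).isPreconnected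
    (fun n y _ => (hasDerivAt_pow n y).const_mul (aa n))
    (fun n y hy => by
      have : |y| ≤ r := by
        have := mem_ball_zero_iff.mp hy; rw [Real.norm_eq_abs] at this; exact this.le
      exact bound1 this hr1.le n)
    (mem_ball_zero_iff.mpr (by rw [Real.norm_eq_abs, abs_zero]; linarith [abs_nonneg x]))
    (summable_FF (by rw [abs_zero]; linarith [abs_nonneg x]))
    (mem_ball_zero_iff.mpr (by rwa [Real.norm_eq_abs]))

lemma hasDerivAt_F1 {x : ℝ} (hx : |x| < 1) : HasDerivAt F1 (F2 x) x := by
  set r : ℝ := (|x| + 1) / 2 with hrdef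
  have hr0 : 0 ≤ r := by positivity
  have hr1 : r < 1 := by rw [hrdef]; linarith
  have hxr : |x| < r := by rw [hrdef]; linarith
  exact hasDerivAt_tsum_of_isPreconnected
    (g := fun n y => aa n * ((n:ℝ) * y ^ (n-1)))
    (g' := fun n y => aa n * ((n:ℝ) * (((n-1:ℕ):ℝ) * y ^ (n-2))))
    (summable_master' hr0 hr1)
    (Metric.isOpen_ball (x := (0:ℝ)) (ε := r)) (convex_ball (0:ℝ) r).isPreconnected
    (fun n y _ => by
      have h := ((hasDerivAt_pow (n-1) y).const_mul ((n:ℝ))).const_mul (aa n)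
      rw [show n - 1 - 1 = n - 2 from by omega] at h
      exact h)
    (fun n y hy => by
      have : |y| ≤ r := by
        have := mem_ball_zero_iff.mp hy; rw [Real.norm_eq_abs] at this; exact this.le
      exact bound2 this hr1.le n)
    (mem_ball_zero_iff.mpr (by rw [Real.norm_eq_abs, abs_zero]; linarith [abs_nonneg x]))
    (summable_F1 (by rw [abs_zero]; linarith [abs_nonneg x]))
    (mem_ball_zero_iff.mpr (by rwa [Real.norm_eq_abs]))

lemma FF_zero : FF 0 = 1 := by
  rw [FF, tsum_eq_single 0 (fun n hn => by simp [zero_pow hn])]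
  simp [aa_zero]

lemma FF_ode {x : ℝ} (hx : |x| < 1) :
    x * (1-x) * F2 x + (1/2 - 2*x) * F1 x = 2/9 * FF x := by
  have S0 := summable_FF hx
  have S1 := summable_F1 hx
  have S2 := summable_F2 hx
  set d : ℕ → ℝ := fun n => aa n * ((n:ℝ) * ((n:ℝ) - 1/2)) * x^(n-1) with hddef
  set e : ℕ → ℝ := fun n => aa n * ((n:ℝ)^2 + (n:ℝ) + 2/9) * x^n with hedef
  have hd : Summable d := by
    apply Summable.of_norm_bounded (summable_master' (abs_nonneg x) hx)
    intro n
    rw [hddef]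
    simp only [Real.norm_eq_abs, abs_mul, abs_of_pos (aa_pos n)]
    have h1 : |x ^ (n-1)| ≤ |x| ^ (n-2) :=
      le_trans (abs_pow_le le_rfl (n-1)) (rpow_le (abs_nonneg x) hx.le (by omega))
    rw [Nat.abs_cast]
    have h2 : (n:ℝ) * |(n:ℝ) - 1/2| ≤ (n:ℝ) * (n:ℝ) := by
      rcases n with _ | m
      · simp
      · have : |((m+1:ℕ):ℝ) - 1/2| ≤ ((m+1:ℕ):ℝ) := by
          rw [abs_le]; push_cast; constructor <;> nlinarith [Nat.cast_nonneg (α := ℝ) m]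
        exact mul_le_mul_of_nonneg_left this (Nat.cast_nonneg _)
    have h3 : (0:ℝ) ≤ (n:ℝ) * |(n:ℝ) - 1/2| := mul_nonneg (Nat.cast_nonneg _) (abs_nonneg _)
    have h4 : aa n * ((n:ℝ) * |(n:ℝ) - 1/2|) * |x^(n-1)| ≤ 1 * ((n:ℝ)*(n:ℝ)) * |x|^(n-2) := by
      apply mul_le_mul (mul_le_mul (aa_le_one n) h2 h3 zero_le_one) h1 (abs_nonneg _)
      positivity
    have h5 : (n:ℝ)*(n:ℝ)*|x|^(n-2) ≤ (n:ℝ) * (((n:ℝ)^2+1) * |x|^(n-2)) := by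
      have : (n:ℝ)*(n:ℝ) ≤ (n:ℝ) * ((n:ℝ)^2+1) := by
        apply mul_le_mul_of_nonneg_left _ (Nat.cast_nonneg n)
        nlinarith [sq_nonneg ((n:ℝ) - 1)]
      calc (n:ℝ)*(n:ℝ)*|x|^(n-2) ≤ (n:ℝ) * ((n:ℝ)^2+1) * |x|^(n-2) :=
            mul_le_mul_of_nonneg_right this (pow_nonneg (abs_nonneg x) _)
        _ = (n:ℝ) * (((n:ℝ)^2+1) * |x|^(n-2)) := by ring
    linarith
  have hd0 : d 0 = 0 := by simp [hddef]
  have he : HasSum e (∑' n, d n) := by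
    have h2 : HasSum (fun n => d (n+1)) (∑' n, d n) := by
      rw [hasSum_nat_add_iff 1]
      simpa [hd0] using hd.hasSum
    have h3 : (fun n => d (n+1)) = e := by
      funext n
      rw [hddef, hedef]
      simp only [Nat.add_sub_cancel]
      push_cast
      linear_combination x^n * aa_rec n
    rwa [h3] at h2
  have hL : HasSum (fun n => x * (1-x) * (aa n * ((n:ℝ) * (((n-1:ℕ):ℝ) * x ^ (n-2))))
      + (1/2 - 2*x) * (aa n * ((n:ℝ) * x ^ (n-1))) - 2/9 * (aa n * x ^ n))
      (x * (1-x) * F2 x + (1/2 - 2*x) * F1 x - 2/9 * FF x) :=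
    ((S2.hasSum.mul_left _).add (S1.hasSum.mul_left _)).sub (S0.hasSum.mul_left _)
  have hR : HasSum (fun n => d n - e n) 0 := by
    simpa using hd.hasSum.sub he
  have hfun : (fun n => x * (1-x) * (aa n * ((n:ℝ) * (((n-1:ℕ):ℝ) * x ^ (n-2))))
      + (1/2 - 2*x) * (aa n * ((n:ℝ) * x ^ (n-1))) - 2/9 * (aa n * x ^ n))
      = fun n => d n - e n := by
    funext n
    rw [hddef, hedef]
    rcases n with _ | _ | k
    · norm_num
      ring
    · norm_num
      ring
    · have e1 : k + 2 - 2 = k := by omega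
      have e2 : k + 2 - 1 = k + 1 := by omega
      rw [e1, e2]
      push_cast
      ring
  rw [hfun] at hL
  have := hL.unique hR
  linarith

noncomputable def GG (t : ℝ) : ℝ := cos t * FF (sin t ^ 2) - cos (t/3)
noncomputable def GG1 (t : ℝ) : ℝ :=
  -sin t * FF (sin t ^ 2) + cos t * (F1 (sin t ^ 2) * (2 * sin t * cos t)) + sin (t/3) * (1/3)
noncomputable def EE (t : ℝ) : ℝ := 9 * (GG1 t)^2 + (GG t)^2

lemma hasDerivAt_sinsq (t : ℝ) : HasDerivAt (fun u : ℝ => sin u ^ 2) (2 * sin t * cos t) t := by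
  have h := (Real.hasDerivAt_sin t).pow 2
  exact h.congr_deriv (by simp)

lemma hasDerivAt_div3 (t : ℝ) : HasDerivAt (fun u : ℝ => u / 3) (1/3 : ℝ) t := by
  simpa using (hasDerivAt_id t).div_const 3

lemma hasDerivAt_GG {t : ℝ} (hx : |sin t ^ 2| < 1) : HasDerivAt GG (GG1 t) t := by
  have hFF : HasDerivAt (fun u : ℝ => FF (sin u ^ 2)) (F1 (sin t ^ 2) * (2 * sin t * cos t)) t := by
    have := (hasDerivAt_FF hx).comp t (hasDerivAt_sinsq t)
    simpa [Function.comp_def] using this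
  have h1 : HasDerivAt (fun u : ℝ => cos u * FF (sin u ^ 2))
      (-sin t * FF (sin t ^ 2) + cos t * (F1 (sin t ^ 2) * (2 * sin t * cos t))) t :=
    (Real.hasDerivAt_cos t).mul hFF
  have h2 : HasDerivAt (fun u : ℝ => cos (u/3)) (-sin (t/3) * (1/3)) t := by
    have := (Real.hasDerivAt_cos (t/3)).comp t (hasDerivAt_div3 t)
    simpa [Function.comp_def] using this
  have := h1.sub h2
  unfold GG GG1
  convert this using 1
  · rfl
  · rfl
  · rfl
  ring

lemma hasDerivAt_GG1 {t : ℝ} (hx : |sin t ^ 2| < 1) : HasDerivAt GG1 (-(1/9) * GG t) t := by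
  have hFF : HasDerivAt (fun u : ℝ => FF (sin u ^ 2)) (F1 (sin t ^ 2) * (2 * sin t * cos t)) t := by
    have := (hasDerivAt_FF hx).comp t (hasDerivAt_sinsq t)
    simpa [Function.comp_def] using this
  have hF1 : HasDerivAt (fun u : ℝ => F1 (sin u ^ 2)) (F2 (sin t ^ 2) * (2 * sin t * cos t)) t := by
    have := (hasDerivAt_F1 hx).comp t (hasDerivAt_sinsq t)
    simpa [Function.comp_def] using this
  have hA : HasDerivAt (fun u : ℝ => -sin u * FF (sin u ^ 2))
      (-cos t * FF (sin t ^ 2) + -sin t * (F1 (sin t ^ 2) * (2 * sin t * cos t))) t :=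
    ((Real.hasDerivAt_sin t).neg).mul hFF
  have h2sc : HasDerivAt (fun u : ℝ => 2 * sin u * cos u)
      (2 * cos t * cos t + 2 * sin t * -sin t) t :=
    ((Real.hasDerivAt_sin t).const_mul 2).mul (Real.hasDerivAt_cos t)
  have hInner : HasDerivAt (fun u : ℝ => F1 (sin u ^ 2) * (2 * sin u * cos u))
      (F2 (sin t ^ 2) * (2 * sin t * cos t) * (2 * sin t * cos t)
        + F1 (sin t ^ 2) * (2 * cos t * cos t + 2 * sin t * -sin t)) t :=
    hF1.mul h2sc
  have hB : HasDerivAt (fun u : ℝ => cos u * (F1 (sin u ^ 2) * (2 * sin u * cos u)))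
      (-sin t * (F1 (sin t ^ 2) * (2 * sin t * cos t))
        + cos t * (F2 (sin t ^ 2) * (2 * sin t * cos t) * (2 * sin t * cos t)
          + F1 (sin t ^ 2) * (2 * cos t * cos t + 2 * sin t * -sin t))) t :=
    (Real.hasDerivAt_cos t).mul hInner
  have hC : HasDerivAt (fun u : ℝ => sin (u/3) * (1/3)) (cos (t/3) * (1/3) * (1/3)) t := by
    have := ((Real.hasDerivAt_sin (t/3)).comp t (hasDerivAt_div3 t)).mul_const (1/3 : ℝ)
    simpa [Function.comp_def] using this
  have htot := (hA.add hB).add hC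
  have hode := FF_ode hx
  have hpyth := sin_sq_add_cos_sq t
  unfold GG1 GG
  convert htot using 1
  · rfl
  · rfl
  · rfl
  linear_combination (-4*cos t) * hode
    + (-(4*sin t^2*cos t * F2 (sin t ^2) + 2*cos t * F1 (sin t^2))) * hpyth

lemma hasDerivAt_EE {t : ℝ} (hx : |sin t ^ 2| < 1) : HasDerivAt EE 0 t := by
  have h := (((hasDerivAt_GG1 hx).pow 2).const_mul 9).add ((hasDerivAt_GG hx).pow 2)
  have h2 : HasDerivAt (fun u => 9 * GG1 u ^ 2 + GG u ^ 2)
      (9 * (2 * GG1 t ^ 1 * (-(1/9) * GG t)) + 2 * GG t ^ 1 * GG1 t) t := by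
    convert h using 1
    · rfl
    · rfl
    · rfl
    · norm_num
  unfold EE
  convert h2 using 1
  ring

lemma GG_eq_zero {b : ℝ} (hb1 : 0 < b) (hb2 : b < π/2) {θ : ℝ} (hθ : θ ∈ Set.Icc (-b) b) :
    GG θ = 0 := by
  have hxm : ∀ t ∈ Set.Icc (-b) b, |sin t ^ 2| < 1 := by
    intro t ht
    have h1 : -(π/2) < t := lt_of_lt_of_le (by linarith) ht.1
    have h2 : t < π/2 := lt_of_le_of_lt ht.2 hb2
    have hc : 0 < cos t := Real.cos_pos_of_mem_Ioo ⟨h1, h2⟩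
    have hpy := sin_sq_add_cos_sq t
    rw [abs_of_nonneg (sq_nonneg _)]
    nlinarith
  have hdiff : DifferentiableOn ℝ EE (Set.Icc (-b) b) := fun t ht =>
    ((hasDerivAt_EE (hxm t ht)).differentiableAt).differentiableWithinAt
  have hderiv : ∀ t ∈ Set.Ico (-b) b, derivWithin EE (Set.Icc (-b) b) t = 0 := by
    intro t ht
    exact (hasDerivAt_EE (hxm t ⟨ht.1, ht.2.le⟩)).hasDerivWithinAt.derivWithin
      ((uniqueDiffOn_Icc (by linarith)) t ⟨ht.1, ht.2.le⟩)
  have hconst := constant_of_derivWithin_zero hdiff hderiv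
  have h0mem : (0:ℝ) ∈ Set.Icc (-b) b := ⟨by linarith, hb1.le⟩
  have hE0 : EE 0 = 0 := by
    have hG0 : GG 0 = 0 := by unfold GG; simp [FF_zero]
    have hG10 : GG1 0 = 0 := by unfold GG1; simp
    unfold EE; rw [hG0, hG10]; ring
  have hEθ : EE θ = 0 := by
    have h1 := hconst θ hθ
    have h2 := hconst 0 h0mem
    rw [h1, ← h2, hE0]
  have h1 : GG θ ^ 2 = 0 := by
    unfold EE at hEθ; nlinarith [sq_nonneg (GG1 θ), sq_nonneg (GG θ)]
  exact pow_eq_zero_iff two_ne_zero |>.mp h1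

theorem stmt_1_FF (κ : ℝ) (hκ : κ ∈ Set.Ioo (0 : ℝ) 1) (φ : ℝ → ℝ)
    (hφ : Differentiable ℝ φ) (hφ0 : φ 0 = 0)
    (hinv : ∀ u : ℝ, deriv φ u * FF (κ ^ 2 * sin (φ u) ^ 2) = 1) :
    ∀ u : ℝ, 4 * (1 - κ ^ 2 * sin (φ u) ^ 2) = deriv φ u ^ 3 + 3 * deriv φ u ^ 2 := by
  obtain ⟨hκ0, hκ1⟩ := hκ
  intro u
  have hsin1 : -1 ≤ sin (φ u) := Real.neg_one_le_sin _
  have hsin2 : sin (φ u) ≤ 1 := Real.sin_le_one _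
  set s : ℝ := κ * sin (φ u) with hs
  have hsk1 : -κ ≤ s := by rw [hs]; nlinarith
  have hsk2 : s ≤ κ := by rw [hs]; nlinarith
  set b : ℝ := Real.arcsin κ with hb
  have hb1 : 0 < b := Real.arcsin_pos.mpr hκ0
  have hb2 : b < π/2 := Real.arcsin_lt_pi_div_two.mpr hκ1
  set θ : ℝ := Real.arcsin s with hθdef
  have hθmem : θ ∈ Set.Icc (-b) b := by
    constructor
    · rw [hθdef, hb, ← Real.arcsin_neg]
      exact Real.monotone_arcsin hsk1
    · exact Real.monotone_arcsin hsk2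
  have hsinθ : sin θ = s := Real.sin_arcsin (by linarith) (by linarith)
  have hGG := GG_eq_zero hb1 hb2 hθmem
  unfold GG at hGG
  have hcosθ : 0 < cos θ := Real.cos_pos_of_mem_Ioo
    ⟨by have := hθmem.1; linarith, by have := hθmem.2; linarith⟩
  set c : ℝ := cos (θ/3) with hc
  have htriple : cos θ = 4*c^3 - 3*c := by
    rw [hc, ← Real.cos_three_mul]
    congr 1
    ring
  have hcpos : 0 < c := by
    rw [hc]
    apply Real.cos_pos_of_mem_Ioo
    have hm1 := hθmem.1
    have hm2 := hθmem.2
    have hpi := Real.pi_pos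
    constructor <;> linarith
  have hx : κ^2 * sin (φ u)^2 = sin θ^2 := by
    rw [hsinθ, hs]; ring
  have hinvu := hinv u
  rw [hx] at hinvu
  have hdc : deriv φ u * c = cos θ := by
    linear_combination cos θ * hinvu - deriv φ u * hGG
  have hdd : deriv φ u = 4*c^2 - 3 := by
    apply mul_right_cancel₀ (ne_of_gt hcpos)
    rw [hdc, htriple]; ring
  have hpy : sin θ^2 = 1 - cos θ^2 := by nlinarith [sin_sq_add_cos_sq θ]
  rw [hx, hpy, htriple, hdd]
  ring

lemma hyperF_eq_FF (x : ℝ) : hyperF (1/3) (2/3) (1/2) x = FF x := rfl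

theorem stmt_1 (κ : ℝ) (hκ : κ ∈ Set.Ioo (0 : ℝ) 1) (φ : ℝ → ℝ)
    (hφ : Differentiable ℝ φ) (hφ0 : φ 0 = 0)
    (hinv : ∀ u : ℝ, deriv φ u * hyperF (1/3) (2/3) (1/2) (κ ^ 2 * sin (φ u) ^ 2) = 1) :
    ∀ u : ℝ, 4 * (1 - κ ^ 2 * sin (φ u) ^ 2) = deriv φ u ^ 3 + 3 * deriv φ u ^ 2 :=
  stmt_1_FF κ hκ φ hφ hφ0 (fun u => by rw [← hyperF_eq_FF]; exact hinv u)
end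

section
/- Let κ ∈ (0,1), g₂ = (4/27)(9 − 8κ²), and g₃ = (8/729)(8κ⁴ − 36κ² + 27). Then for every real w < 0: w⁴ − (1/2)g₂w² − g₃w − (1/48)g₂² = 0 if and only if w = −1/3. -/
theorem stmt_4 (κ g₂ g₃ : ℝ) (hκ : κ ∈ Set.Ioo (0 : ℝ) 1)
    (hg₂ : g₂ = (4/27) * (9 - 8 * κ ^ 2))
    (hg₃ : g₃ = (8/729) * (8 * κ ^ 4 - 36 * κ ^ 2 + 27)) :
    ∀ w : ℝ, w < 0 →
      (w ^ 4 - (1/2) * g₂ * w ^ 2 - g₃ * w - (1/48) * g₂ ^ 2 = 0 ↔ w = -(1/3)) := by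
  obtain ⟨hκ0, hκ1⟩ := hκ
  subst hg₂ hg₃
  intro w hw
  constructor
  · intro h
    have key : (w + 1/3) *
        (w ^ 3 - w ^ 2 / 3 + (16 * κ ^ 2 / 27 - 5/9) * w - (9 - 8 * κ ^ 2) ^ 2 / 729) = 0 := by
      linear_combination h
    have hκ2 : 0 < κ ^ 2 := by positivity
    have hC : w ^ 3 - w ^ 2 / 3 + (16 * κ ^ 2 / 27 - 5/9) * w - (9 - 8 * κ ^ 2) ^ 2 / 729 < 0 := by
      nlinarith [sq_nonneg (w + 1/3 - 8 * κ ^ 2 / 27), sq_nonneg (w + 1/3),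
        mul_nonneg (sq_nonneg (w + 1/3)) (le_of_lt (neg_pos.mpr hw)),
        mul_pos (mul_pos hκ2 hκ2) (neg_pos.mpr hw),
        mul_pos hκ2 (neg_pos.mpr hw), sq_nonneg κ, sq_nonneg (κ * (w + 1/3))]
    have := mul_eq_zero.mp key
    rcases this with h1 | h2
    · linarith
    · exact absurd h2 (ne_of_lt hC)
  · intro h
    subst h
    ring
end

section
/- Let a be a real number with 0 < a < π/6 and set λ = cos(3a), x₂ = 1 + 2cos(2a + π/3) = 1 + cos(2a) − √3 sin(2a), and x₃ = 1 + 2cos(2a − π/3) = 1 + cos(2a) + √3 sin(2a). Then 0 < x₂ < 2, 2 < x₃ < 3, (−x₂)³ + 3(−x₂)² − 4λ² = 0, and (−x₃)³ + 3(−x₃)² − 4λ² = 0. -/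
open Real

theorem stmt_7 (a lam x₂ x₃ : ℝ) (ha : 0 < a) (ha' : a < π / 6)
    (hlam : lam = cos (3 * a))
    (hx₂ : x₂ = 1 + 2 * cos (2 * a + π / 3))
    (hx₃ : x₃ = 1 + 2 * cos (2 * a - π / 3)) :
    x₂ = 1 + cos (2 * a) - Real.sqrt 3 * sin (2 * a) ∧
    x₃ = 1 + cos (2 * a) + Real.sqrt 3 * sin (2 * a) ∧
    (0 < x₂ ∧ x₂ < 2) ∧ (2 < x₃ ∧ x₃ < 3) ∧
    (-x₂) ^ 3 + 3 * (-x₂) ^ 2 - 4 * lam ^ 2 = 0 ∧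
    (-x₃) ^ 3 + 3 * (-x₃) ^ 2 - 4 * lam ^ 2 = 0 := by
  have hpi := Real.pi_pos
  have hcx3 : cos (2*a - π/3) = cos (π/3 - 2*a) := by
    rw [show 2*a - π/3 = -(π/3 - 2*a) by ring, cos_neg]
  have h23 : cos (2*π/3) = -(1/2) := by
    rw [show (2:ℝ)*π/3 = π - π/3 by ring, cos_pi_sub, cos_pi_div_three]
  -- bound 1: cos(2π/3) < cos(2a+π/3)
  have b1 : cos (2*π/3) < cos (2*a + π/3) :=
    Real.strictAntiOn_cos ⟨by linarith, by linarith⟩ ⟨by linarith, by linarith⟩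
      (by linarith)
  -- bound 2: cos(2a+π/3) < cos(π/3)
  have b2 : cos (2*a + π/3) < cos (π/3) :=
    Real.strictAntiOn_cos ⟨by linarith, by linarith⟩ ⟨by linarith, by linarith⟩
      (by linarith)
  -- bound 3: cos(π/3) < cos(π/3 - 2a)
  have b3 : cos (π/3) < cos (π/3 - 2*a) :=
    Real.strictAntiOn_cos ⟨by linarith, by linarith⟩ ⟨by linarith, by linarith⟩
      (by linarith)
  -- bound 4: cos(π/3 - 2a) < cos 0
  have b4 : cos (π/3 - 2*a) < cos 0 :=
    Real.strictAntiOn_cos ⟨by linarith, by linarith⟩ ⟨by linarith, by linarith⟩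
      (by linarith)
  rw [cos_pi_div_three] at b2 b3
  rw [cos_zero] at b4
  have h6 : cos (6*a) = 2 * cos (3*a)^2 - 1 := by
    rw [show (6:ℝ)*a = 2*(3*a) by ring, cos_two_mul]
  have e2 : cos (3*(2*a + π/3)) = -cos (6*a) := by
    rw [show 3*(2*a + π/3) = 6*a + π by ring, cos_add_pi]
  have e3 : cos (3*(2*a - π/3)) = -cos (6*a) := by
    rw [show 3*(2*a - π/3) = 6*a - π by ring, cos_sub_pi]
  have k2 : (-(1 + 2*cos (2*a + π/3)))^3 + 3*(-(1 + 2*cos (2*a + π/3)))^2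
      = 2 - 2 * cos (3*(2*a + π/3)) := by rw [cos_three_mul]; ring
  have k3 : (-(1 + 2*cos (2*a - π/3)))^3 + 3*(-(1 + 2*cos (2*a - π/3)))^2
      = 2 - 2 * cos (3*(2*a - π/3)) := by rw [cos_three_mul]; ring
  refine ⟨?_, ?_, ⟨by linarith [h23, b1], by linarith⟩,
    ⟨by rw [hx₃, hcx3]; linarith, by rw [hx₃, hcx3]; linarith⟩, ?_, ?_⟩
  · rw [hx₂, cos_add, cos_pi_div_three, sin_pi_div_three]; ring
  · rw [hx₃, cos_sub, cos_pi_div_three, sin_pi_div_three]; ring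
  · rw [hx₂, hlam, show (-(1 + 2*cos (2*a + π/3)))^3 + 3*(-(1 + 2*cos (2*a + π/3)))^2
      = 2 - 2 * cos (3*(2*a + π/3)) from k2, e2, h6]; ring
  · rw [hx₃, hlam, show (-(1 + 2*cos (2*a - π/3)))^3 + 3*(-(1 + 2*cos (2*a - π/3)))^2
      = 2 - 2 * cos (3*(2*a - π/3)) from k3, e3, h6]; ring
end

section
/- Let α > β > γ > δ be real numbers, and set M = (1/2)√((α − γ)(β − δ)) and k′² = (β − γ)(α − δ) / ((α − γ)(β − δ)). Then ∫_γ^β M / √((x − α)(x − β)(x − γ)(x − δ)) dx = (π/2) · F(1/2, 1/2; 1; k′²). -/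
open Real

open Finset

noncomputable def cbA (n : ℕ) : ℝ := (n.centralBinom : ℝ) / 4 ^ n

lemma cbA_zero : cbA 0 = 1 := by simp [cbA, Nat.centralBinom]

lemma cbA_pos (n : ℕ) : 0 < cbA n :=
  div_pos (by exact_mod_cast n.centralBinom_pos) (by positivity)

lemma cbA_rec (n : ℕ) : ((n : ℝ) + 1) * cbA (n + 1) = ((n : ℝ) + 1/2) * cbA n := by
  have h := Nat.succ_mul_centralBinom_succ n
  have h' : ((n+1) * Nat.centralBinom (n+1) : ℝ) = (2 * (2*n+1) * n.centralBinom : ℝ) := by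
    exact_mod_cast congrArg (Nat.cast : ℕ → ℝ) h
  push_cast at h'
  simp only [cbA]
  rw [pow_succ]
  field_simp
  nlinarith [h', pow_pos (show (0:ℝ)<4 by norm_num) n]

lemma cbA_le_one (n : ℕ) : cbA n ≤ 1 := by
  induction n with
  | zero => simp [cbA_zero]
  | succ k ih =>
    have hrec := cbA_rec k
    have hk : (0:ℝ) < (k:ℝ) + 1 := by positivity
    have : ((k : ℝ) + 1) * cbA (k+1) ≤ ((k:ℝ) + 1) * cbA k := by
      rw [hrec]; nlinarith [cbA_pos k]
    have h2 := (mul_le_mul_iff_right₀ hk).mp this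
    linarith

noncomputable def cbS (n : ℕ) : ℝ := ∑ k ∈ range (n+1), cbA k * cbA (n - k)

lemma cbS_sym (n : ℕ) :
    ∑ k ∈ range (n+1), (k : ℝ) * (cbA k * cbA (n - k)) = (n / 2) * cbS n := by
  have hrefl := Finset.sum_range_reflect (fun k => (k : ℝ) * (cbA k * cbA (n - k))) (n+1)
  have h2 : ∑ k ∈ range (n+1), ((n - k : ℕ) : ℝ) * (cbA (n-k) * cbA (n - (n - k)))
      = ∑ k ∈ range (n+1), (k : ℝ) * (cbA k * cbA (n - k)) := by
    simpa using hrefl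
  have h3 : ∀ k ∈ range (n+1), ((n - k : ℕ) : ℝ) * (cbA (n-k) * cbA (n - (n-k)))
      = ((n : ℝ) - k) * (cbA k * cbA (n-k)) := by
    intro k hk
    rw [Finset.mem_range] at hk
    have hkn : k ≤ n := Nat.lt_succ_iff.mp hk
    rw [Nat.cast_sub hkn, Nat.sub_sub_self hkn]
    ring
  rw [Finset.sum_congr rfl h3] at h2
  have h4 : ∑ k ∈ range (n+1), ((n:ℝ) - k) * (cbA k * cbA (n-k))
      = (n:ℝ) * cbS n - ∑ k ∈ range (n+1), (k : ℝ) * (cbA k * cbA (n - k)) := by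
    rw [cbS, Finset.mul_sum, ← Finset.sum_sub_distrib]
    congr 1; ext k; ring
  rw [h4] at h2
  linarith

lemma cbS_succ (n : ℕ) : cbS (n+1) = cbS n := by
  have key : ∑ k ∈ range (n+2), (k : ℝ) * (cbA k * cbA (n+1 - k))
      = (((n:ℝ)+1) / 2) * cbS n := by
    rw [Finset.sum_range_succ' (fun k => (k : ℝ) * (cbA k * cbA (n+1 - k))) (n+1)]
    have h1 : ∀ k ∈ range (n+1), ((k+1 : ℕ) : ℝ) * (cbA (k+1) * cbA (n+1 - (k+1)))
        = ((k:ℝ) + 1/2) * (cbA k * cbA (n - k)) := by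
      intro k hk
      have : (n + 1 - (k+1)) = n - k := by omega
      rw [this]
      push_cast
      have := cbA_rec k
      nlinarith [this, cbA_pos (n-k)]
    rw [Finset.sum_congr rfl h1]
    have h2 : ∑ k ∈ range (n+1), ((k:ℝ) + 1/2) * (cbA k * cbA (n - k))
        = (∑ k ∈ range (n+1), (k:ℝ) * (cbA k * cbA (n - k))) + (1/2) * cbS n := by
      rw [cbS, Finset.mul_sum, ← Finset.sum_add_distrib]
      congr 1; ext k; ring
    rw [h2, cbS_sym]
    push_cast
    ring
  have key2 := cbS_sym (n+1)
  push_cast at key2 key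
  have hpos : ((n:ℝ) + 1) / 2 ≠ 0 := by positivity
  have := key2.symm.trans key
  field_simp at this
  exact this

lemma cbS_eq_one (n : ℕ) : cbS n = 1 := by
  induction n with
  | zero => simp [cbS, cbA_zero]
  | succ k ih => rw [cbS_succ, ih]

lemma cbA_summable {u : ℝ} (h0 : 0 ≤ u) (h1 : u < 1) :
    Summable (fun n => cbA n * u ^ n) := by
  apply Summable.of_nonneg_of_le
    (fun n => mul_nonneg (cbA_pos n).le (pow_nonneg h0 n))
    (fun n => ?_) (summable_geometric_of_lt_one h0 h1)
  calc cbA n * u ^ n ≤ 1 * u ^ n := by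
        apply mul_le_mul_of_nonneg_right (cbA_le_one n) (by positivity)
    _ = u ^ n := one_mul _

lemma cbA_hasSum {u : ℝ} (h0 : 0 ≤ u) (h1 : u < 1) :
    HasSum (fun n => cbA n * u ^ n) (1 / Real.sqrt (1 - u)) := by
  have hsum := cbA_summable h0 h1
  have hnorm : Summable (fun n => ‖cbA n * u ^ n‖) := by
    apply Summable.of_nonneg_of_le (fun n => norm_nonneg _) (fun n => ?_)
      (summable_geometric_of_lt_one h0 h1)
    rw [Real.norm_eq_abs, abs_of_nonneg (mul_nonneg (cbA_pos n).le (pow_nonneg h0 n))]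
    calc cbA n * u ^ n ≤ 1 * u ^ n :=
          mul_le_mul_of_nonneg_right (cbA_le_one n) (by positivity)
      _ = u ^ n := one_mul _
  set g : ℝ := ∑' n, cbA n * u ^ n with hg
  have hcauchy : g * g = ∑' n : ℕ,
      ∑ k ∈ range (n+1), (cbA k * u ^ k) * (cbA (n-k) * u ^ (n-k)) :=
    tsum_mul_tsum_eq_tsum_sum_range_of_summable_norm hnorm hnorm
  have hterm : ∀ n : ℕ, ∑ k ∈ range (n+1), (cbA k * u ^ k) * (cbA (n-k) * u ^ (n-k))
      = u ^ n := by
    intro n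
    have : ∀ k ∈ range (n+1), (cbA k * u ^ k) * (cbA (n-k) * u ^ (n-k))
        = (cbA k * cbA (n-k)) * u ^ n := by
      intro k hk
      rw [Finset.mem_range] at hk
      have hkn : k ≤ n := Nat.lt_succ_iff.mp hk
      have h5 : u ^ k * u ^ (n - k) = u ^ n := by
        rw [← pow_add, Nat.add_sub_cancel' hkn]
      rw [mul_mul_mul_comm, h5]
    rw [Finset.sum_congr rfl this, ← Finset.sum_mul]
    have := cbS_eq_one n
    rw [cbS] at this
    rw [this, one_mul]
  have hsq : g * g = 1 / (1 - u) := by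
    rw [hcauchy, tsum_congr hterm, tsum_geometric_of_lt_one h0 h1, one_div]
  have hgpos : 0 < g := by
    have h0le : (1 : ℝ) ≤ g := by
      have := Summable.le_tsum hsum 0 (fun i _ => mul_nonneg (cbA_pos i).le (pow_nonneg h0 i))
      simpa [cbA_zero] using this
    linarith
  have h1u : 0 < 1 - u := by linarith
  have hgr : g = 1 / Real.sqrt (1 - u) := by
    have h6 : Real.sqrt (g * g) = g := Real.sqrt_mul_self hgpos.le
    rw [hsq] at h6
    rw [← h6, one_div, Real.sqrt_inv, one_div]
  rw [← hgr]
  exact hsum.hasSum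

lemma poch_half (n : ℕ) :
    (ascPochhammer ℝ n).eval (1/2 : ℝ) = cbA n * n.factorial := by
  induction n with
  | zero => simp [cbA_zero]
  | succ k ih =>
    rw [ascPochhammer_succ_eval, ih]
    have := cbA_rec k
    rw [Nat.factorial_succ]
    push_cast
    nlinarith [this]

lemma hyperF_eq (u : ℝ) : hyperF (1/2) (1/2) 1 u = ∑' n : ℕ, cbA n ^ 2 * u ^ n := by
  unfold hyperF
  apply tsum_congr
  intro n
  rw [poch_half, ascPochhammer_eval_one]
  have hfac : (n.factorial : ℝ) ≠ 0 := Nat.cast_ne_zero.mpr n.factorial_ne_zero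
  field_simp

lemma prod_eq_cbA (n : ℕ) :
    ∏ i ∈ range n, (2 * (i : ℝ) + 1) / (2 * i + 2) = cbA n := by
  induction n with
  | zero => simp [cbA_zero]
  | succ k ih =>
    rw [Finset.prod_range_succ, ih]
    have hrec := cbA_rec k
    have h2 : (2 * (k:ℝ) + 2) ≠ 0 := by positivity
    field_simp
    nlinarith [hrec]

lemma integral_sin_pow_half (n : ℕ) :
    ∫ θ in (0:ℝ)..(π/2), Real.sin θ ^ (2*n) = (π/2) * cbA n := by
  have hfull : ∫ θ in (0:ℝ)..π, Real.sin θ ^ (2*n) = π * cbA n := by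
    rw [integral_sin_pow_even, prod_eq_cbA]
  have hsplit : ∫ θ in (0:ℝ)..π, Real.sin θ ^ (2*n)
      = (∫ θ in (0:ℝ)..(π/2), Real.sin θ ^ (2*n))
        + ∫ θ in (π/2)..π, Real.sin θ ^ (2*n) :=
    (intervalIntegral.integral_add_adjacent_intervals
      ((continuous_sin.pow _).intervalIntegrable _ _)
      ((continuous_sin.pow _).intervalIntegrable _ _)).symm
  have hrefl : ∫ θ in (π/2)..π, Real.sin θ ^ (2*n)
      = ∫ θ in (0:ℝ)..(π/2), Real.sin θ ^ (2*n) := by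
    have := intervalIntegral.integral_comp_sub_left
      (fun x => Real.sin x ^ (2*n)) π (a := 0) (b := π/2)
    simp only [Real.sin_pi_sub] at this
    rw [show π - π/2 = π/2 by ring, sub_zero] at this
    exact this.symm
  rw [hrefl] at hsplit
  rw [hfull] at hsplit
  linarith

lemma integral_one_div_sqrt_one_sub_sin_sq {k : ℝ} (h0 : 0 ≤ k) (h1 : k < 1) :
    ∫ θ in (0:ℝ)..(π/2), 1 / Real.sqrt (1 - k * Real.sin θ ^ 2)
      = (π/2) * ∑' n : ℕ, cbA n ^ 2 * k ^ n := by
  have hpi : (0:ℝ) ≤ π/2 := by positivity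
  set f : ℕ → ℝ → ℝ := fun n θ => cbA n * k ^ n * Real.sin θ ^ (2*n) with hf
  have hptwise : ∀ θ : ℝ, 1 / Real.sqrt (1 - k * Real.sin θ ^ 2) = ∑' n, f n θ := by
    intro θ
    have hu0 : 0 ≤ k * Real.sin θ ^ 2 := mul_nonneg h0 (sq_nonneg _)
    have hu1 : k * Real.sin θ ^ 2 < 1 := by
      have hs : Real.sin θ ^ 2 ≤ 1 := Real.sin_sq_le_one θ
      nlinarith
    have hs := (cbA_hasSum hu0 hu1).tsum_eq
    rw [← hs]
    apply tsum_congr ?_ |>.symm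
    intro n
    rw [hf]
    simp only [mul_pow, pow_mul]
    ring
  rw [intervalIntegral.integral_of_le hpi]
  simp_rw [hptwise]
  have hmeas : ∀ n : ℕ, MeasureTheory.AEStronglyMeasurable (f n)
      (MeasureTheory.volume.restrict (Set.Ioc (0:ℝ) (π/2))) := by
    intro n
    exact ((continuous_const.mul ((continuous_sin.pow (2*n)))).aestronglyMeasurable)
  have hbound : ∀ n : ℕ, ∫⁻ θ in Set.Ioc (0:ℝ) (π/2), ‖f n θ‖₊
      ≤ ENNReal.ofReal (k ^ n * (π/2)) := by
    intro n
    have hle : ∀ θ : ℝ, (‖f n θ‖₊ : ENNReal) ≤ ENNReal.ofReal (k ^ n) := by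
      intro θ
      rw [← enorm_eq_nnnorm, ← ofReal_norm]
      apply ENNReal.ofReal_le_ofReal
      rw [Real.norm_eq_abs, hf]
      have h1' : |Real.sin θ ^ (2*n)| ≤ 1 := by
        rw [abs_pow, pow_mul, ← abs_pow]
        apply pow_le_one₀ (abs_nonneg _)
        rw [abs_pow]
        exact pow_le_one₀ (abs_nonneg _) (Real.abs_sin_le_one θ)
      rw [abs_mul]
      calc |cbA n * k ^ n| * |Real.sin θ ^ (2*n)| ≤ |cbA n * k ^ n| * 1 :=
            mul_le_mul_of_nonneg_left h1' (abs_nonneg _)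
        _ = cbA n * k ^ n := by
            rw [mul_one, abs_of_nonneg (mul_nonneg (cbA_pos n).le (pow_nonneg h0 n))]
        _ ≤ 1 * k ^ n := mul_le_mul_of_nonneg_right (cbA_le_one n) (pow_nonneg h0 n)
        _ = k ^ n := one_mul _
    calc ∫⁻ θ in Set.Ioc (0:ℝ) (π/2), ‖f n θ‖₊
        ≤ ∫⁻ _ in Set.Ioc (0:ℝ) (π/2), ENNReal.ofReal (k ^ n) :=
          MeasureTheory.lintegral_mono (fun θ => hle θ)
      _ = ENNReal.ofReal (k ^ n) * MeasureTheory.volume (Set.Ioc (0:ℝ) (π/2)) := by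
          rw [MeasureTheory.lintegral_const, MeasureTheory.Measure.restrict_apply_univ]
      _ = ENNReal.ofReal (k ^ n * (π/2)) := by
          rw [Real.volume_Ioc, sub_zero, ENNReal.ofReal_mul (pow_nonneg h0 n)]
  have hfin : ∑' n : ℕ, ∫⁻ θ in Set.Ioc (0:ℝ) (π/2), ‖f n θ‖₊ ≠ ⊤ := by
    apply ne_top_of_le_ne_top ?_ (ENNReal.tsum_le_tsum hbound)
    rw [← ENNReal.ofReal_tsum_of_nonneg
      (fun n => mul_nonneg (pow_nonneg h0 n) hpi)
      ((summable_geometric_of_lt_one h0 h1).mul_right _)]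
    exact ENNReal.ofReal_ne_top
  rw [MeasureTheory.integral_tsum hmeas hfin]
  have hterm : ∀ n : ℕ, ∫ θ in Set.Ioc (0:ℝ) (π/2), f n θ
      = (π/2) * (cbA n ^ 2 * k ^ n) := by
    intro n
    rw [← intervalIntegral.integral_of_le hpi]
    rw [hf]
    simp only []
    rw [intervalIntegral.integral_const_mul, integral_sin_pow_half]
    ring
  rw [tsum_congr hterm, tsum_mul_left]

lemma change_of_var {α β γ δ : ℝ} (hαβ : β < α) (hβγ : γ < β) (hγδ : δ < γ) :
    ∫ x in γ..β, 1/2 * Real.sqrt ((α - γ) * (β - δ)) /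
        Real.sqrt ((x - α) * (x - β) * (x - γ) * (x - δ))
      = ∫ θ in (0:ℝ)..(π/2),
          1 / Real.sqrt (1 - (β - γ) * (α - δ) / ((α - γ) * (β - δ)) * Real.sin θ ^ 2) := by
  have hp : 0 < α - γ := by linarith
  have hq : 0 < β - δ := by linarith
  have hr : 0 < β - γ := by linarith
  have ht : 0 < γ - δ := by linarith
  have had : 0 < α - δ := by linarith
  have hpq : 0 < (α - γ) * (β - δ) := mul_pos hp hq
  set k : ℝ := (β - γ) * (α - δ) / ((α - γ) * (β - δ)) with hk
  have hk0 : 0 < k := div_pos (mul_pos hr had) hpq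
  have hk1 : k < 1 := by
    rw [hk, div_lt_one hpq]; nlinarith
  have hDpos : ∀ θ : ℝ, 0 < (β - δ) - (β - γ) * Real.sin θ ^ 2 := by
    intro θ
    nlinarith [Real.sin_sq_le_one θ]
  set g : ℝ → ℝ := fun θ => (γ * (β - δ) - δ * (β - γ) * Real.sin θ ^ 2) /
      ((β - δ) - (β - γ) * Real.sin θ ^ 2) with hg
  set g' : ℝ → ℝ := fun θ =>
      2 * Real.sin θ * Real.cos θ * (β - γ) * (γ - δ) * (β - δ) /
        ((β - δ) - (β - γ) * Real.sin θ ^ 2) ^ 2 with hg'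
  have hderiv : ∀ θ, HasDerivAt g (g' θ) θ := by
    intro θ
    have hsin : HasDerivAt (fun θ : ℝ => Real.sin θ ^ 2)
        (2 * Real.sin θ * Real.cos θ) θ := by
      have := (Real.hasDerivAt_sin θ).fun_pow 2
      simpa [mul_comm, mul_assoc] using this
    have hN : HasDerivAt (fun θ : ℝ => γ * (β - δ) - δ * (β - γ) * Real.sin θ ^ 2)
        (-(δ * (β - γ) * (2 * Real.sin θ * Real.cos θ))) θ := by
      simpa [mul_assoc] using (hsin.const_mul (δ * (β - γ))).const_sub (γ * (β - δ))
    have hDd : HasDerivAt (fun θ : ℝ => (β - δ) - (β - γ) * Real.sin θ ^ 2)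
        (-((β - γ) * (2 * Real.sin θ * Real.cos θ))) θ := by
      simpa [mul_assoc] using (hsin.const_mul (β - γ)).const_sub (β - δ)
    have hne := (hDpos θ).ne'
    have := hN.fun_div hDd hne
    refine this.congr_deriv ?_
    rw [hg']
    field_simp
    ring
  have hcont : ContinuousOn g (Set.Icc 0 (π/2)) :=
    fun θ _ => (hderiv θ).continuousAt.continuousWithinAt
  have hg'pos : ∀ θ ∈ Set.Ioo (0:ℝ) (π/2), 0 < g' θ := by
    intro θ hθ
    have hsp : 0 < Real.sin θ := Real.sin_pos_of_pos_of_lt_pi hθ.1 (by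
      have := pi_pos; linarith [hθ.2])
    have hcp : 0 < Real.cos θ := Real.cos_pos_of_mem_Ioo ⟨by linarith [hθ.1, pi_pos], hθ.2⟩
    rw [hg']
    apply div_pos (by positivity) (pow_pos (hDpos θ) 2)
  have hmono : StrictMonoOn g (Set.Icc 0 (π/2)) := by
    apply strictMonoOn_of_deriv_pos (convex_Icc _ _) hcont
    intro θ hθ
    rw [interior_Icc] at hθ
    rw [(hderiv θ).deriv]
    exact hg'pos θ hθ
  have hg0 : g 0 = γ := by
    rw [hg]
    simp only [Real.sin_zero]
    rw [zero_pow (by norm_num), mul_zero, mul_zero, sub_zero, sub_zero,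
      mul_div_assoc, div_self hq.ne', mul_one]
  have hgπ : g (π/2) = β := by
    rw [hg]
    simp only [Real.sin_pi_div_two, one_pow, mul_one]
    rw [div_eq_iff (by nlinarith : (β - δ) - (β - γ) ≠ 0)]
    ring
  have hπ2 : (0:ℝ) ≤ π/2 := by positivity
  have himg : g '' Set.Ioo 0 (π/2) = Set.Ioo γ β := by
    apply Set.Subset.antisymm
    · rintro x ⟨θ, hθ, rfl⟩
      constructor
      · have := hmono (Set.left_mem_Icc.mpr hπ2) (Set.Ioo_subset_Icc_self hθ) hθ.1
        rwa [hg0] at this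
      · have := hmono (Set.Ioo_subset_Icc_self hθ) (Set.right_mem_Icc.mpr hπ2) hθ.2
        rwa [hgπ] at this
    · have := intermediate_value_Ioo hπ2 hcont
      rwa [hg0, hgπ] at this
  have hinj : Set.InjOn g (Set.Ioo 0 (π/2)) := (hmono.mono Set.Ioo_subset_Icc_self).injOn
  have hcv := MeasureTheory.integral_image_eq_integral_abs_deriv_smul measurableSet_Ioo
    (fun θ _ => (hderiv θ).hasDerivWithinAt) hinj
    (fun x => 1/2 * Real.sqrt ((α - γ) * (β - δ)) /
      Real.sqrt ((x - α) * (x - β) * (x - γ) * (x - δ)))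
  rw [himg] at hcv
  rw [intervalIntegral.integral_of_le hβγ.le, MeasureTheory.integral_Ioc_eq_integral_Ioo, hcv,
    intervalIntegral.integral_of_le hπ2, MeasureTheory.integral_Ioc_eq_integral_Ioo]
  apply MeasureTheory.setIntegral_congr_fun measurableSet_Ioo
  intro θ hθ
  dsimp only
  obtain ⟨hθ0, hθπ⟩ := hθ
  have hsp : 0 < Real.sin θ := Real.sin_pos_of_pos_of_lt_pi hθ0 (by linarith [pi_pos])
  have hcp : 0 < Real.cos θ := Real.cos_pos_of_mem_Ioo ⟨by linarith [pi_pos], hθπ⟩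
  set s : ℝ := Real.sin θ with hsθ
  set c : ℝ := Real.cos θ with hcθ
  have hsc : s ^ 2 + c ^ 2 = 1 := Real.sin_sq_add_cos_sq θ
  have hc2 : c ^ 2 = 1 - s ^ 2 := by linarith
  have hDθ : 0 < (β - δ) - (β - γ) * s ^ 2 := hDpos θ
  have hs1 : s ^ 2 ≤ 1 := by nlinarith
  have hks : 0 < 1 - k * s ^ 2 := by nlinarith
  have hxv : g θ = (γ * (β - δ) - δ * (β - γ) * s ^ 2) /
      ((β - δ) - (β - γ) * s ^ 2) := by rw [hg]
  have hXeq : (g θ - α) * (g θ - β) * (g θ - γ) * (g θ - δ)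
      = ((α - γ) * (β - δ) * (1 - k * s ^ 2)) *
        (((β - δ) * (β - γ) * (γ - δ) * s * c / ((β - δ) - (β - γ) * s ^ 2) ^ 2) ^ 2) := by
    rw [hxv, hk]
    rw [show ((β - δ) * (β - γ) * (γ - δ) * s * c / ((β - δ) - (β - γ) * s ^ 2) ^ 2) ^ 2
        = ((β - δ) * (β - γ) * (γ - δ)) ^ 2 * s ^ 2 * (1 - s ^ 2) /
          (((β - δ) - (β - γ) * s ^ 2) ^ 2) ^ 2 from by
      rw [div_pow]
      congr 1
      rw [show ((β - δ) * (β - γ) * (γ - δ) * s * c) ^ 2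
          = ((β - δ) * (β - γ) * (γ - δ)) ^ 2 * s ^ 2 * c ^ 2 from by ring, hc2]]
    field_simp
    ring
  have hW : 0 < (β - δ) * (β - γ) * (γ - δ) * s * c / ((β - δ) - (β - γ) * s ^ 2) ^ 2 :=
    div_pos (by positivity) (pow_pos hDθ 2)
  have hsqrtX : Real.sqrt ((g θ - α) * (g θ - β) * (g θ - γ) * (g θ - δ))
      = Real.sqrt ((α - γ) * (β - δ)) * Real.sqrt (1 - k * s ^ 2) *
        ((β - δ) * (β - γ) * (γ - δ) * s * c / ((β - δ) - (β - γ) * s ^ 2) ^ 2) := by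
    rw [hXeq, Real.sqrt_mul (by positivity), Real.sqrt_sq hW.le,
      Real.sqrt_mul hpq.le]
  have hsqpq : 0 < Real.sqrt ((α - γ) * (β - δ)) := Real.sqrt_pos.mpr hpq
  have hsqks : 0 < Real.sqrt (1 - k * s ^ 2) := Real.sqrt_pos.mpr hks
  rw [abs_of_pos (hg'pos θ ⟨hθ0, hθπ⟩), smul_eq_mul, hsqrtX, hg']
  beta_reduce
  rw [← hsθ, ← hcθ]
  field_simp
  rw [div_mul_cancel_left₀ (by nlinarith), one_div]

theorem stmt_9 (α β γ δ M k'sq : ℝ)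
    (hαβ : β < α) (hβγ : γ < β) (hγδ : δ < γ)
    (hM : M = (1/2) * Real.sqrt ((α - γ) * (β - δ)))
    (hk' : k'sq = (β - γ) * (α - δ) / ((α - γ) * (β - δ))) :
    ∫ x in γ..β, M / Real.sqrt ((x - α) * (x - β) * (x - γ) * (x - δ)) =
      (π / 2) * hyperF (1/2) (1/2) 1 k'sq := by
  have hp : 0 < α - γ := by linarith
  have hq : 0 < β - δ := by linarith
  have hr : 0 < β - γ := by linarith
  have had : 0 < α - δ := by linarith
  have hpq : 0 < (α - γ) * (β - δ) := mul_pos hp hq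
  have hk0 : 0 ≤ k'sq := by rw [hk']; positivity
  have hk1 : k'sq < 1 := by
    rw [hk', div_lt_one hpq]; nlinarith
  rw [hM, hk']
  rw [change_of_var hαβ hβγ hγδ]
  rw [← hk', integral_one_div_sqrt_one_sub_sin_sq hk0 hk1, hyperF_eq]
end

section
/- For all real numbers a, b and every real x with 0 ≤ x < 1: ∫_0^{π/2} F(a, b; 1/2; x sin²t) dt = (π/2) · F(a, b; 1; x). -/
open Real

open MeasureTheory Filter


lemma poch_half_pos (n : ℕ) : 0 < (ascPochhammer ℝ n).eval (1/2 : ℝ) :=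
  ascPochhammer_pos n _ (by norm_num)

lemma wallis_half (n : ℕ) :
    ∫ t in (0:ℝ)..(π/2), sin t ^ (2*n) =
      π/2 * ((ascPochhammer ℝ n).eval (1/2 : ℝ) / (n.factorial : ℝ)) := by
  induction n with
  | zero => simp
  | succ k ih =>
    have h2 : 2 * (k+1) = 2*k + 2 := by ring
    rw [h2, integral_sin_pow, ih, ascPochhammer_succ_eval, Nat.factorial_succ]
    have hk : (k.factorial : ℝ) ≠ 0 := by positivity
    simp only [sin_zero, cos_pi_div_two, mul_zero, zero_mul, sub_zero, zero_pow]
    push_cast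
    field_simp
    ring


lemma hsum (a b x : ℝ) (hx : 0 ≤ x) (hx' : x < 1) :
    Summable (fun n : ℕ => |(ascPochhammer ℝ n).eval a * (ascPochhammer ℝ n).eval b /
      ((ascPochhammer ℝ n).eval (1/2:ℝ) * (n.factorial : ℝ))| * x ^ n) := by
  set P : ℕ → ℝ := fun n => (ascPochhammer ℝ n).eval a * (ascPochhammer ℝ n).eval b /
      ((ascPochhammer ℝ n).eval (1/2:ℝ) * (n.factorial : ℝ)) with hPdef
  set r : ℝ := (1 + x) / 2 with hrdef
  have hr : r < 1 := by rw [hrdef]; linarith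
  have hxr : x < r := by rw [hrdef]; linarith
  apply summable_of_ratio_norm_eventually_le hr
  -- tendsto of the ratio
  have hden1 : Tendsto (fun n : ℕ => ((n:ℝ) + 1/2)) atTop atTop :=
    tendsto_atTop_add_const_right atTop (1/2) tendsto_natCast_atTop_atTop
  have hden2 : Tendsto (fun n : ℕ => ((n:ℝ) + 1)) atTop atTop :=
    tendsto_atTop_add_const_right atTop 1 tendsto_natCast_atTop_atTop
  have h1 : Tendsto (fun n : ℕ => ((n:ℝ) + a) / ((n:ℝ) + 1/2)) atTop (nhds 1) := by
    have : (fun n : ℕ => ((n:ℝ) + a) / ((n:ℝ) + 1/2)) =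
        fun n : ℕ => 1 + (a - 1/2) / ((n:ℝ) + 1/2) := by
      funext n
      have : ((n:ℝ) + 1/2) ≠ 0 := by positivity
      field_simp
      ring
    rw [this]
    have := Tendsto.div_atTop (tendsto_const_nhds (x := a - 1/2) (f := atTop)) hden1
    simpa using tendsto_const_nhds.add this
  have h2 : Tendsto (fun n : ℕ => ((n:ℝ) + b) / ((n:ℝ) + 1)) atTop (nhds 1) := by
    have : (fun n : ℕ => ((n:ℝ) + b) / ((n:ℝ) + 1)) =
        fun n : ℕ => 1 + (b - 1) / ((n:ℝ) + 1) := by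
      funext n
      have : ((n:ℝ) + 1) ≠ 0 := by positivity
      field_simp
      ring
    rw [this]
    have := Tendsto.div_atTop (tendsto_const_nhds (x := b - 1) (f := atTop)) hden2
    simpa using tendsto_const_nhds.add this
  have hh : Tendsto (fun n : ℕ => x * (((n:ℝ) + a) / ((n:ℝ) + 1/2)) *
      (((n:ℝ) + b) / ((n:ℝ) + 1))) atTop (nhds x) := by
    have := (tendsto_const_nhds (x := x) (f := (atTop : Filter ℕ))).mul h1 |>.mul h2
    simpa using this
  filter_upwards [hh.eventually_lt_const hxr,
    tendsto_natCast_atTop_atTop.eventually_ge_atTop (-a),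
    tendsto_natCast_atTop_atTop.eventually_ge_atTop (-b)] with n hn ha hb
  have ha' : (0:ℝ) ≤ (n:ℝ) + a := by linarith
  have hb' : (0:ℝ) ≤ (n:ℝ) + b := by linarith
  have hC : (0:ℝ) < (ascPochhammer ℝ n).eval (1/2:ℝ) := ascPochhammer_pos n _ (by norm_num)
  have hF : (0:ℝ) < (n.factorial : ℝ) := by positivity
  have hkey : P (n+1) = P n * (((n:ℝ) + a) * ((n:ℝ) + b) / (((n:ℝ) + 1/2) * ((n:ℝ) + 1))) := by
    simp only [hPdef, ascPochhammer_succ_eval, Nat.factorial_succ]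
    push_cast
    field_simp
    ring
  have hrat : x * (((n:ℝ) + a) / ((n:ℝ) + 1/2)) * (((n:ℝ) + b) / ((n:ℝ) + 1)) =
      x * (((n:ℝ) + a) * ((n:ℝ) + b) / (((n:ℝ) + 1/2) * ((n:ℝ) + 1))) := by
    field_simp
  rw [hrat] at hn
  have hratnn : (0:ℝ) ≤ ((n:ℝ) + a) * ((n:ℝ) + b) / (((n:ℝ) + 1/2) * ((n:ℝ) + 1)) := by
    positivity
  calc ‖|P (n+1)| * x ^ (n+1)‖
      = |P n| * x ^ n * (x * (((n:ℝ) + a) * ((n:ℝ) + b) / (((n:ℝ) + 1/2) * ((n:ℝ) + 1)))) := by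
        rw [Real.norm_of_nonneg (by positivity), hkey, abs_mul,
          abs_of_nonneg hratnn, pow_succ]
        ring
    _ ≤ |P n| * x ^ n * r := by
        apply mul_le_mul_of_nonneg_left hn.le (by positivity)
    _ = r * ‖|P n| * x ^ n‖ := by rw [Real.norm_of_nonneg (by positivity)]; ring

theorem stmt_12 (a b x : ℝ) (hx : 0 ≤ x) (hx' : x < 1) :
    ∫ t in (0 : ℝ)..(π / 2), hyperF a b (1/2) (x * sin t ^ 2) =
      (π / 2) * hyperF a b 1 x := by
  have hle : (0:ℝ) ≤ π/2 := by positivity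
  have hC : ∀ n : ℕ, (0:ℝ) < (ascPochhammer ℝ n).eval (1/2:ℝ) :=
    fun n => ascPochhammer_pos n _ (by norm_num)
  set F : ℕ → ℝ → ℝ := fun n t =>
    ((ascPochhammer ℝ n).eval a * (ascPochhammer ℝ n).eval b /
      ((ascPochhammer ℝ n).eval (1/2:ℝ) * (n.factorial : ℝ))) * (x * sin t ^ 2) ^ n with hF
  have hcont : ∀ n, Continuous (F n) := by
    intro n; apply Continuous.mul continuous_const
    exact (continuous_const.mul ((continuous_sin).pow 2)).pow n
  have hint : ∀ n : ℕ, Integrable (F n) (volume.restrict (Set.Ioc 0 (π/2))) :=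
    fun n => (hcont n).integrableOn_Ioc
  have hbound : ∀ n : ℕ, ∀ t : ℝ, ‖F n t‖ ≤
      |(ascPochhammer ℝ n).eval a * (ascPochhammer ℝ n).eval b /
        ((ascPochhammer ℝ n).eval (1/2:ℝ) * (n.factorial : ℝ))| * x ^ n := by
    intro n t
    rw [hF]
    simp only [norm_mul, norm_pow, Real.norm_eq_abs]
    apply mul_le_mul_of_nonneg_left _ (abs_nonneg _)
    apply pow_le_pow_left₀ (by positivity)
    rw [abs_of_nonneg hx]
    have h : |sin t| ^ 2 ≤ 1 := pow_le_one₀ (abs_nonneg _) (abs_sin_le_one t)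
    nlinarith [h]
  have hnorm : Summable (fun n : ℕ => ∫ t in Set.Ioc (0:ℝ) (π/2), ‖F n t‖) := by
    apply Summable.of_nonneg_of_le
      (fun n => integral_nonneg (fun t => norm_nonneg _))
      (fun n => ?_) (((hsum a b x hx hx').mul_left (π/2)))
    calc ∫ t in Set.Ioc (0:ℝ) (π/2), ‖F n t‖
        ≤ ∫ _ in Set.Ioc (0:ℝ) (π/2),
            |(ascPochhammer ℝ n).eval a * (ascPochhammer ℝ n).eval b /
              ((ascPochhammer ℝ n).eval (1/2:ℝ) * (n.factorial : ℝ))| * x ^ n := by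
          apply integral_mono ((hint n).norm)
            (integrable_const _) (fun t => hbound n t)
      _ = π/2 * (|(ascPochhammer ℝ n).eval a * (ascPochhammer ℝ n).eval b /
              ((ascPochhammer ℝ n).eval (1/2:ℝ) * (n.factorial : ℝ))| * x ^ n) := by
          rw [setIntegral_const, measureReal_def, Real.volume_Ioc, sub_zero, smul_eq_mul,
            ENNReal.toReal_ofReal hle]
  rw [intervalIntegral.integral_of_le hle]
  have hswap := MeasureTheory.integral_tsum_of_summable_integral_norm hint hnorm
  have : ∫ t in Set.Ioc (0:ℝ) (π/2), hyperF a b (1/2) (x * sin t ^ 2) =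
      ∫ t in Set.Ioc (0:ℝ) (π/2), ∑' n : ℕ, F n t := rfl
  rw [this, ← hswap, hyperF, ← tsum_mul_left]
  apply tsum_congr
  intro n
  have h1 : ∀ t : ℝ, F n t = ((ascPochhammer ℝ n).eval a * (ascPochhammer ℝ n).eval b /
      ((ascPochhammer ℝ n).eval (1/2:ℝ) * (n.factorial : ℝ))) * x ^ n * sin t ^ (2*n) := by
    intro t
    rw [hF]
    simp only [mul_pow, ← pow_mul]
    ring
  calc ∫ t in Set.Ioc (0:ℝ) (π/2), F n t
      = ∫ t in Set.Ioc (0:ℝ) (π/2),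
          ((ascPochhammer ℝ n).eval a * (ascPochhammer ℝ n).eval b /
            ((ascPochhammer ℝ n).eval (1/2:ℝ) * (n.factorial : ℝ))) * x ^ n * sin t ^ (2*n) := by
        simp_rw [h1]
    _ = ((ascPochhammer ℝ n).eval a * (ascPochhammer ℝ n).eval b /
          ((ascPochhammer ℝ n).eval (1/2:ℝ) * (n.factorial : ℝ))) * x ^ n *
          ∫ t in Set.Ioc (0:ℝ) (π/2), sin t ^ (2*n) := by
        rw [integral_const_mul]
    _ = π / 2 * ((ascPochhammer ℝ n).eval a * (ascPochhammer ℝ n).eval b /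
          ((ascPochhammer ℝ n).eval (1:ℝ) * (n.factorial : ℝ)) * x ^ n) := by
        rw [← intervalIntegral.integral_of_le hle, wallis_half, ascPochhammer_eval_one]
        have h2 : ((ascPochhammer ℝ n).eval (1/2:ℝ)) ≠ 0 := (hC n).ne'
        have h3 : (n.factorial : ℝ) ≠ 0 := by positivity
        field_simp
end

section
/- Let a be a real number with 0 < a < π/6 and set κ = sin(3a), λ = cos(3a), x₁ = 2cos(2a) − 1. Then ∫_{x₁}^{1} 1 / √((1 − x)(x³ + 3x² − 4λ²)) dx = (π/3) · F(1/3, 2/3; 1; κ²). -/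
open Real

namespace S13

noncomputable def aa (n : ℕ) : ℝ :=
  (ascPochhammer ℝ n).eval (1/3) * (ascPochhammer ℝ n).eval (2/3) /
    ((ascPochhammer ℝ n).eval (1/2) * (n.factorial : ℝ))

lemma aa_zero : aa 0 = 1 := by simp [aa]

lemma aa_pos (n : ℕ) : 0 < aa n := by
  have h1 := ascPochhammer_pos n (1/3 : ℝ) (by norm_num)
  have h2 := ascPochhammer_pos n (2/3 : ℝ) (by norm_num)
  have h3 := ascPochhammer_pos n (1/2 : ℝ) (by norm_num)
  have h4 : (0:ℝ) < n.factorial := by positivity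
  exact div_pos (mul_pos h1 h2) (mul_pos h3 h4)

lemma aa_rec (n : ℕ) : aa (n+1) * (((n:ℝ)+1) * ((n:ℝ) + 1/2)) = aa n * (((n:ℝ) + 1/3) * ((n:ℝ) + 2/3)) := by
  have h3 := (ascPochhammer_pos n (1/2 : ℝ) (by norm_num)).ne'
  have h4 : ((n.factorial : ℝ)) ≠ 0 := by positivity
  unfold aa
  rw [ascPochhammer_succ_eval, ascPochhammer_succ_eval, ascPochhammer_succ_eval,
    Nat.factorial_succ]
  push_cast
  field_simp
  ring

lemma aa_le_one (n : ℕ) : aa n ≤ 1 := by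
  induction n with
  | zero => simp [aa_zero]
  | succ n ih =>
    have h := aa_rec n
    have hpos : (0:ℝ) < ((n:ℝ)+1) * ((n:ℝ) + 1/2) := by positivity
    have h2 : aa (n+1) = aa n * (((n:ℝ) + 1/3) * ((n:ℝ) + 2/3)) / (((n:ℝ)+1) * ((n:ℝ) + 1/2)) := by
      field_simp at h ⊢; linarith [h]
    rw [h2]
    rw [div_le_one hpos]
    nlinarith [aa_pos n, (aa_pos n).le, ih, Nat.cast_nonneg (α := ℝ) n]


noncomputable def g (n : ℕ) (z : ℝ) : ℝ := aa n * sin z ^ (2*n) * cos z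
noncomputable def g1 (n : ℕ) (z : ℝ) : ℝ :=
  aa n * ((2*n) * sin z ^ (2*n-1) * cos z ^ 2 - sin z ^ (2*n+1))
noncomputable def g2 (n : ℕ) (z : ℝ) : ℝ :=
  aa n * ((2*n) * ((2*n-1) * sin z ^ (2*n-2)) * cos z ^ 3
    - (2*(2*n) + (2*n+1)) * sin z ^ (2*n) * cos z)
noncomputable def dd (n : ℕ) (z : ℝ) : ℝ :=
  aa n * ((2*n) * ((2*n-1) * sin z ^ (2*n-2))) * cos z

lemma hasDerivAt_g (n : ℕ) (z : ℝ) : HasDerivAt (g n) (g1 n z) z := by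
  have h := (((Real.hasDerivAt_sin z).pow (2*n)).mul (Real.hasDerivAt_cos z)).const_mul (aa n)
  have e : g n = fun z => aa n * (sin z ^ (2*n) * cos z) := by
    funext y; simp [g]; ring
  rw [e]
  have h' : HasDerivAt (fun z => aa n * (sin z ^ (2*n) * cos z)) _ z := h
  convert h' using 1
  rcases n with _ | m
  · simp [g1, Pi.pow_apply]
  · have h2 : 2*(m+1) - 1 = 2*m+1 := by omega
    simp only [g1, h2, Pi.pow_apply]
    push_cast
    ring

lemma hasDerivAt_g1 (n : ℕ) (z : ℝ) : HasDerivAt (g1 n) (g2 n z) z := by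
  have h := (((((Real.hasDerivAt_sin z).pow (2*n-1)).const_mul ((2*n:ℕ):ℝ)).mul
      ((Real.hasDerivAt_cos z).pow 2)).sub ((Real.hasDerivAt_sin z).pow (2*n+1))).const_mul (aa n)
  have e : g1 n = fun z => aa n * (((2*n:ℕ):ℝ) * sin z ^ (2*n-1) * cos z ^ 2 - sin z ^ (2*n+1)) := by
    funext y; simp [g1]
  rw [e]
  have h' : HasDerivAt (fun z => aa n * (((2*n:ℕ):ℝ) * sin z ^ (2*n-1) * cos z ^ 2 - sin z ^ (2*n+1))) _ z := h
  convert h' using 1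
  rcases n with _ | m
  · simp [g2, Pi.pow_apply]
  · have h1 : 2*(m+1) - 1 - 1 = 2*m := by omega
    have h2 : 2*(m+1) - 1 = 2*m+1 := by omega
    have h3 : 2*(m+1) - 2 = 2*m := by omega
    have h4 : 2*(m+1) + 1 - 1 = 2*(m+1) := by omega
    have h5 : 2*(m+1) = 2*m+2 := by omega
    simp only [g2, h1, h2, h3, h4, h5, Pi.pow_apply]
    push_cast
    ring


-- the bound function
noncomputable def uu (ρ : ℝ) (n : ℕ) : ℝ := 9 * ((n:ℝ)+1)^2 * (ρ^(2*n) / ρ^2)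

lemma summable_uu {ρ : ℝ} (h0 : 0 < ρ) (h1 : ρ < 1) : Summable (uu ρ) := by
  have hr2 : |ρ^2| < 1 := by
    rw [abs_of_nonneg (by positivity)]; nlinarith
  have h := summable_pow_mul_geometric_of_norm_lt_one (R := ℝ) 2 (by rwa [Real.norm_eq_abs])
  have h1' := summable_pow_mul_geometric_of_norm_lt_one (R := ℝ) 1 (by rwa [Real.norm_eq_abs])
  have h0' := summable_pow_mul_geometric_of_norm_lt_one (R := ℝ) 0 (by rwa [Real.norm_eq_abs])
  have hsum : Summable (fun n : ℕ => ((n:ℝ)+1)^2 * (ρ^2)^n) := by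
    have := (h.add ((h1'.mul_left 2).add h0'))
    apply this.congr
    intro n
    push_cast
    ring
  refine (hsum.mul_left (9 / ρ^2)).congr fun n => ?_
  rw [uu, ← pow_mul]
  field_simp

lemma abs_mul3_le {A B C a b c : ℝ} (hA : |A| ≤ a) (hB : |B| ≤ b) (hC : |C| ≤ c) :
    |A*B*C| ≤ a*b*c := by
  have h1 := abs_nonneg A; have h2 := abs_nonneg B; have h3 := abs_nonneg C
  rw [abs_mul, abs_mul]
  apply mul_le_mul (mul_le_mul hA hB h2 (h1.trans hA)) hC h3
  exact mul_nonneg (h1.trans hA) (h2.trans hB)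

section bounds
variable {ρ : ℝ} (h0 : 0 < ρ) (h1 : ρ < 1)

lemma pow_sin_le {y : ℝ} (hy : |sin y| ≤ ρ) (k : ℕ) : |sin y ^ k| ≤ ρ ^ k := by
  rw [abs_pow]; exact pow_le_pow_left₀ (abs_nonneg _) hy k

include h0 h1 in
lemma rhelp (n k : ℕ) (hk : 2*n ≤ k + 2) : ρ ^ k ≤ ρ^(2*n)/ρ^2 := by
  rw [le_div_iff₀ (by positivity), ← pow_add]
  exact pow_le_pow_of_le_one h0.le h1.le (by omega)

include h0 h1 in
lemma bound_g {n : ℕ} {y : ℝ} (hy : |sin y| ≤ ρ) : ‖g n y‖ ≤ uu ρ n := by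
  have hx : (0:ℝ) ≤ ρ^(2*n)/ρ^2 := by positivity
  have h9 : (1:ℝ) ≤ 9 * ((n:ℝ)+1)^2 := by nlinarith [Nat.cast_nonneg (α := ℝ) n]
  have key : |aa n * sin y ^ (2*n) * cos y| ≤ 1 * (ρ^(2*n)/ρ^2) * 1 :=
    abs_mul3_le (by rw [abs_of_pos (aa_pos n)]; exact aa_le_one n)
      ((pow_sin_le hy _).trans (rhelp h0 h1 n _ (by omega))) (abs_cos_le_one y)
  rw [Real.norm_eq_abs, g]
  refine key.trans ?_
  rw [uu]
  nlinarith [mul_nonneg (sub_nonneg.mpr h9) hx]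

include h0 h1 in
lemma bound_g1 {n : ℕ} {y : ℝ} (hy : |sin y| ≤ ρ) : ‖g1 n y‖ ≤ uu ρ n := by
  have hx : (0:ℝ) ≤ ρ^(2*n)/ρ^2 := by positivity
  have hn : (0:ℝ) ≤ (n:ℝ) := Nat.cast_nonneg n
  have h9 : (2*(n:ℝ)+1) ≤ 9 * ((n:ℝ)+1)^2 := by nlinarith
  have hc2 : |cos y ^ 2| ≤ 1 := by
    rw [abs_pow]; exact pow_le_one₀ (abs_nonneg _) (abs_cos_le_one y)
  have k1 : |2*(n:ℝ) * sin y ^ (2*n-1) * cos y ^ 2| ≤ (2*(n:ℝ)) * (ρ^(2*n)/ρ^2) * 1 :=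
    abs_mul3_le (by rw [abs_of_nonneg (by positivity)])
      ((pow_sin_le hy _).trans (rhelp h0 h1 n _ (by omega))) hc2
  have k2 : |sin y ^ (2*n+1)| ≤ ρ^(2*n)/ρ^2 :=
    (pow_sin_le hy _).trans (rhelp h0 h1 n _ (by omega))
  rw [Real.norm_eq_abs, g1, abs_mul, abs_of_pos (aa_pos n)]
  have tri : |2*(n:ℝ) * sin y ^ (2*n-1) * cos y ^ 2 - sin y ^ (2*n+1)|
      ≤ (2*(n:ℝ)) * (ρ^(2*n)/ρ^2) * 1 + ρ^(2*n)/ρ^2 :=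
    (abs_sub _ _).trans (by linarith [k1, k2])
  calc aa n * |2*(n:ℝ) * sin y ^ (2*n-1) * cos y ^ 2 - sin y ^ (2*n+1)|
      ≤ 1 * ((2*(n:ℝ)) * (ρ^(2*n)/ρ^2) * 1 + ρ^(2*n)/ρ^2) :=
        mul_le_mul (aa_le_one n) tri (abs_nonneg _) (by norm_num)
    _ ≤ uu ρ n := by
        rw [uu]; nlinarith [mul_nonneg (sub_nonneg.mpr h9) hx]

include h0 h1 in
lemma bound_g2 {n : ℕ} {y : ℝ} (hy : |sin y| ≤ ρ) : ‖g2 n y‖ ≤ uu ρ n := by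
  have hx : (0:ℝ) ≤ ρ^(2*n)/ρ^2 := by positivity
  have hn : (0:ℝ) ≤ (n:ℝ) := Nat.cast_nonneg n
  have h9 : (2*(n:ℝ))*((2*(n:ℝ)+1)) + (2*(2*(n:ℝ)) + (2*(n:ℝ)+1)) ≤ 9 * ((n:ℝ)+1)^2 := by
    nlinarith
  have hc3 : |cos y ^ 3| ≤ 1 := by
    rw [abs_pow]; exact pow_le_one₀ (abs_nonneg _) (abs_cos_le_one y)
  have hinner : |(2*(n:ℝ)-1) * sin y ^ (2*n-2)| ≤ (2*(n:ℝ)+1) * (ρ^(2*n)/ρ^2) := by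
    rw [abs_mul]
    apply mul_le_mul _ ((pow_sin_le hy _).trans (rhelp h0 h1 n _ (by omega))) (abs_nonneg _)
      (by positivity)
    rw [abs_le]; constructor <;> linarith
  have k1 : |2*(n:ℝ) * ((2*(n:ℝ)-1) * sin y ^ (2*n-2)) * cos y ^ 3|
      ≤ (2*(n:ℝ)) * ((2*(n:ℝ)+1) * (ρ^(2*n)/ρ^2)) * 1 :=
    abs_mul3_le (by rw [abs_of_nonneg (by positivity)]) hinner hc3
  have k2 : |(2*(2*(n:ℝ)) + (2*(n:ℝ)+1)) * sin y ^ (2*n) * cos y|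
      ≤ (2*(2*(n:ℝ)) + (2*(n:ℝ)+1)) * (ρ^(2*n)/ρ^2) * 1 :=
    abs_mul3_le (by rw [abs_of_nonneg (by positivity)])
      ((pow_sin_le hy _).trans (rhelp h0 h1 n _ (by omega))) (abs_cos_le_one y)
  rw [Real.norm_eq_abs, g2, abs_mul, abs_of_pos (aa_pos n)]
  have tri : |2*(n:ℝ) * ((2*(n:ℝ)-1) * sin y ^ (2*n-2)) * cos y ^ 3
      - (2*(2*(n:ℝ)) + (2*(n:ℝ)+1)) * sin y ^ (2*n) * cos y|
      ≤ (2*(n:ℝ)) * ((2*(n:ℝ)+1) * (ρ^(2*n)/ρ^2)) * 1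
        + (2*(2*(n:ℝ)) + (2*(n:ℝ)+1)) * (ρ^(2*n)/ρ^2) * 1 :=
    (abs_sub _ _).trans (by linarith [k1, k2])
  calc aa n * |2*(n:ℝ) * ((2*(n:ℝ)-1) * sin y ^ (2*n-2)) * cos y ^ 3
        - (2*(2*(n:ℝ)) + (2*(n:ℝ)+1)) * sin y ^ (2*n) * cos y|
      ≤ 1 * ((2*(n:ℝ)) * ((2*(n:ℝ)+1) * (ρ^(2*n)/ρ^2)) * 1
          + (2*(2*(n:ℝ)) + (2*(n:ℝ)+1)) * (ρ^(2*n)/ρ^2) * 1) :=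
        mul_le_mul (aa_le_one n) tri (abs_nonneg _) (by norm_num)
    _ ≤ uu ρ n := by
        rw [uu]; nlinarith [mul_nonneg (sub_nonneg.mpr h9) hx]

include h0 h1 in
lemma bound_dd {n : ℕ} {y : ℝ} (hy : |sin y| ≤ ρ) : |dd n y| ≤ uu ρ n := by
  have hx : (0:ℝ) ≤ ρ^(2*n)/ρ^2 := by positivity
  have hn : (0:ℝ) ≤ (n:ℝ) := Nat.cast_nonneg n
  have h9 : (2*(n:ℝ))*(2*(n:ℝ)+1) ≤ 9 * ((n:ℝ)+1)^2 := by nlinarith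
  have hinner : |(2*(n:ℝ)-1) * sin y ^ (2*n-2)| ≤ (2*(n:ℝ)+1) * (ρ^(2*n)/ρ^2) := by
    rw [abs_mul]
    apply mul_le_mul _ ((pow_sin_le hy _).trans (rhelp h0 h1 n _ (by omega))) (abs_nonneg _)
      (by positivity)
    rw [abs_le]; constructor <;> linarith
  have k1 : |aa n * (2*(n:ℝ) * ((2*(n:ℝ)-1) * sin y ^ (2*n-2))) * cos y|
      ≤ 1 * ((2*(n:ℝ)) * ((2*(n:ℝ)+1) * (ρ^(2*n)/ρ^2))) * 1 := by
    apply abs_mul3_le (by rw [abs_of_pos (aa_pos n)]; exact aa_le_one n) _ (abs_cos_le_one y)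
    rw [abs_mul]
    apply mul_le_mul _ hinner (abs_nonneg _) (by positivity)
    rw [abs_of_nonneg (by positivity)]
  rw [dd]
  refine k1.trans ?_
  rw [uu]; nlinarith [mul_nonneg (sub_nonneg.mpr h9) hx]

end bounds


lemma key_identity (n : ℕ) (z : ℝ) : g2 n z + (1/9) * g n z = dd n z - dd (n+1) z := by
  have hc : cos z ^ 3 = (1 - sin z ^ 2) * cos z := by
    rw [pow_succ, cos_sq']
  rcases n with _ | m
  · have h0 := aa_rec 0
    norm_num at h0
    simp only [g2, g, dd, aa_zero]
    norm_num
    rw [aa_zero] at h0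
    linear_combination (4 * cos z) * h0
  · have hrec := aa_rec (m+1)
    have e1 : 2*(m+1)-2 = 2*m := by omega
    have e2 : 2*(m+1+1)-2 = 2*m+2 := by omega
    have e3 : 2*(m+1) = 2*m+2 := by omega
    have e4 : 2*(m+1+1) = 2*m+4 := by omega
    simp only [g2, g, dd, e1, e2, e3, e4]
    rw [hc]
    push_cast
    push_cast at hrec
    linear_combination (4 * sin z ^ (2*m+2) * cos z) * hrec

section tsums
variable {c : ℝ} (hc0 : 0 < c) (hc : c < π/2)

lemma abs_sin_le_sin {y : ℝ} (hy : |y| ≤ c) (hcpi : c ≤ π/2) (hc0' : 0 ≤ c) :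
    |sin y| ≤ sin c := by
  have hmono : sin |y| ≤ sin c := by
    apply strictMonoOn_sin.monotoneOn _ _ hy
    · constructor <;> [linarith [abs_nonneg y, pi_pos.le]; linarith]
    · constructor <;> [linarith [pi_pos.le]; linarith]
  have habs : |sin y| = sin |y| := by
    rcases le_or_gt 0 y with h | h
    · rw [abs_of_nonneg h, abs_of_nonneg]
      apply sin_nonneg_of_nonneg_of_le_pi h
      nlinarith [abs_nonneg y, pi_pos, abs_of_nonneg h]
    · have hnp : sin y ≤ 0 := by
        apply sin_nonpos_of_nonpos_of_neg_pi_le h.le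
        have h2 : |y| ≤ π/2 := le_trans hy hcpi
        rw [abs_of_neg h] at h2
        linarith [pi_pos]
      rw [abs_of_neg h, sin_neg, abs_of_nonpos hnp]
  rw [habs]; exact hmono

include hc0 hc in
lemma rho_facts : 0 < sin c ∧ sin c < 1 := by
  constructor
  · apply sin_pos_of_pos_of_lt_pi hc0; linarith [pi_pos]
  · have := strictMonoOn_sin (a := c) (b := π/2) ⟨by linarith, hc.le⟩
      ⟨by linarith [pi_pos], le_refl _⟩ hc
    rwa [sin_pi_div_two] at this

include hc0 hc in
lemma summable_g_at {z : ℝ} (hz : |sin z| ≤ sin c) : Summable (fun n => g n z) := by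
  obtain ⟨h0, h1⟩ := rho_facts hc0 hc
  exact Summable.of_norm_bounded (summable_uu h0 h1) (fun n => bound_g h0 h1 hz)

include hc0 hc in
lemma summable_g1_at {z : ℝ} (hz : |sin z| ≤ sin c) : Summable (fun n => g1 n z) := by
  obtain ⟨h0, h1⟩ := rho_facts hc0 hc
  exact Summable.of_norm_bounded (summable_uu h0 h1) (fun n => bound_g1 h0 h1 hz)

include hc0 hc in
lemma summable_g2_at {z : ℝ} (hz : |sin z| ≤ sin c) : Summable (fun n => g2 n z) := by
  obtain ⟨h0, h1⟩ := rho_facts hc0 hc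
  exact Summable.of_norm_bounded (summable_uu h0 h1) (fun n => bound_g2 h0 h1 hz)

include hc0 hc in
lemma summable_dd_at {z : ℝ} (hz : |sin z| ≤ sin c) : Summable (fun n => dd n z) := by
  obtain ⟨h0, h1⟩ := rho_facts hc0 hc
  refine Summable.of_norm_bounded (summable_uu h0 h1) (fun n => ?_)
  rw [Real.norm_eq_abs]
  exact bound_dd h0 h1 hz

include hc0 hc in
lemma tsum_g2_eq {z : ℝ} (hz : |sin z| ≤ sin c) :
    ∑' n, g2 n z = -(1/9) * ∑' n, g n z := by
  have hsum_g := summable_g_at hc0 hc hz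
  have hsum_dd := summable_dd_at hc0 hc hz
  have hdd1 : Summable (fun n => dd (n+1) z) := by
    exact (summable_nat_add_iff (f := fun n => dd n z) 1).mpr hsum_dd
  have htel : ∑' n, (dd n z - dd (n+1) z) = 0 := by
    rw [Summable.tsum_sub hsum_dd hdd1]
    have h2 := Summable.tsum_eq_zero_add hsum_dd
    have hd0 : dd 0 z = 0 := by simp [dd]
    rw [hd0, zero_add] at h2
    linarith [h2]
  have hrw : ∀ n, g2 n z = (dd n z - dd (n+1) z) - (1/9) * g n z := fun n => by
    have := key_identity n z; linarith
  calc ∑' n, g2 n z = ∑' n, ((dd n z - dd (n+1) z) - (1/9) * g n z) := tsum_congr hrw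
    _ = ∑' n, (dd n z - dd (n+1) z) - ∑' n, (1/9) * g n z :=
        Summable.tsum_sub (hsum_dd.sub hdd1) (hsum_g.mul_left _)
    _ = -(1/9) * ∑' n, g n z := by rw [htel, tsum_mul_left]; ring

include hc0 hc in
lemma sin_mem_le {y : ℝ} (hy : y ∈ Set.Ioo (-c) c) : |sin y| ≤ sin c := by
  apply abs_sin_le_sin _ hc.le hc0.le
  rw [abs_le]
  exact ⟨hy.1.le, hy.2.le⟩

include hc0 hc in
lemma hasDerivAt_L {z : ℝ} (hz : z ∈ Set.Ioo (-c) c) :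
    HasDerivAt (fun w => ∑' n, g n w) (∑' n, g1 n z) z := by
  obtain ⟨h0, h1⟩ := rho_facts hc0 hc
  apply hasDerivAt_tsum_of_isPreconnected (summable_uu h0 h1) isOpen_Ioo
    ((convex_Ioo (-c) c).isPreconnected) (fun n y _ => hasDerivAt_g n y)
    (fun n y hy => bound_g1 h0 h1 (sin_mem_le hc0 hc hy))
    (Set.mem_Ioo.mpr ⟨by linarith, hc0⟩) _ hz
  exact summable_g_at hc0 hc (by simpa using (sin_pos_of_pos_of_lt_pi hc0 (by linarith [pi_pos])).le)

include hc0 hc in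
lemma hasDerivAt_M {z : ℝ} (hz : z ∈ Set.Ioo (-c) c) :
    HasDerivAt (fun w => ∑' n, g1 n w) (∑' n, g2 n z) z := by
  obtain ⟨h0, h1⟩ := rho_facts hc0 hc
  apply hasDerivAt_tsum_of_isPreconnected (summable_uu h0 h1) isOpen_Ioo
    ((convex_Ioo (-c) c).isPreconnected) (fun n y _ => hasDerivAt_g1 n y)
    (fun n y hy => bound_g2 h0 h1 (sin_mem_le hc0 hc hy))
    (Set.mem_Ioo.mpr ⟨by linarith, hc0⟩) _ hz
  exact summable_g1_at hc0 hc (by simpa using (sin_pos_of_pos_of_lt_pi hc0 (by linarith [pi_pos])).le)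

end tsums


lemma series_val {z : ℝ} (h0z : 0 ≤ z) (hz : z < π/2) :
    (∑' n, aa n * sin z ^ (2*n)) * cos z = cos (z/3) := by
  have hpi := pi_pos
  set c := (z + π/2)/2 with hcdef
  have hc0 : 0 < c := by rw [hcdef]; linarith
  have hcπ : c < π/2 := by rw [hcdef]; linarith
  have hzc : z ∈ Set.Ioo (-c) c := ⟨by rw [hcdef]; linarith, by rw [hcdef]; linarith⟩
  have hD : ∀ y ∈ Set.Ioo (-c) c,
      HasDerivAt (fun w => (∑' n, g n w) - cos (w/3))
        ((∑' n, g1 n y) + sin (y/3) * (1/3)) y := by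
    intro y hy
    have h1 := hasDerivAt_L hc0 hcπ hy
    have h2 : HasDerivAt (fun w : ℝ => cos (w/3)) (-sin (y/3) * (1/3)) y := by
      have h3 := HasDerivAt.comp y (Real.hasDerivAt_cos (y/3)) ((hasDerivAt_id y).div_const 3)
      exact h3
    have h4 : HasDerivAt (fun w => (∑' n, g n w) - cos (w/3)) _ y := h1.sub h2
    convert h4 using 1
    ring
  have hN : ∀ y ∈ Set.Ioo (-c) c,
      HasDerivAt (fun w => (∑' n, g1 n w) + sin (w/3) * (1/3))
        (-(1/9) * ((∑' n, g n y) - cos (y/3))) y := by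
    intro y hy
    have h1 := hasDerivAt_M hc0 hcπ hy
    rw [tsum_g2_eq hc0 hcπ (sin_mem_le hc0 hcπ hy)] at h1
    have h2 : HasDerivAt (fun w : ℝ => sin (w/3) * (1/3)) (cos (y/3) * (1/3) * (1/3)) y := by
      have h3 := HasDerivAt.comp y (Real.hasDerivAt_sin (y/3)) ((hasDerivAt_id y).div_const 3)
      simpa [Function.comp] using h3.mul_const (1/3)
    have h4 : HasDerivAt (fun w => (∑' n, g1 n w) + sin (w/3) * (1/3)) _ y := h1.add h2
    convert h4 using 1
    ring
  have hE : ∀ y ∈ Set.Ioo (-c) c,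
      HasDerivAt (fun w => 9 * ((∑' n, g1 n w) + sin (w/3) * (1/3))^2
        + ((∑' n, g n w) - cos (w/3))^2) 0 y := by
    intro y hy
    have h1 : HasDerivAt (fun w => 9 * ((∑' n, g1 n w) + sin (w/3) * (1/3))^2
        + ((∑' n, g n w) - cos (w/3))^2) _ y := (((hN y hy).pow 2).const_mul 9).add ((hD y hy).pow 2)
    convert h1 using 1
    push_cast
    ring
  have hsub : Set.Icc 0 z ⊆ Set.Ioo (-c) c := fun w hw =>
    ⟨by rw [hcdef]; simp only [Set.mem_Icc] at hw; linarith [hw.1],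
     by rw [hcdef]; simp only [Set.mem_Icc] at hw; linarith [hw.2]⟩
  have hEconst := constant_of_has_deriv_right_zero
    (f := fun w => 9 * ((∑' n, g1 n w) + sin (w/3) * (1/3))^2 + ((∑' n, g n w) - cos (w/3))^2)
    (a := 0) (b := z)
    (fun w hw => (hE w (hsub hw)).continuousAt.continuousWithinAt)
    (fun w hw => ((hE w (hsub (Set.Ico_subset_Icc_self hw))).hasDerivWithinAt))
    z (Set.right_mem_Icc.mpr h0z)
  have hL0 : (∑' n, g n 0) = 1 := by
    rw [tsum_eq_single 0 (fun n hn => by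
      simp [g, zero_pow (by omega : 2*n ≠ 0)])]
    simp [g, aa_zero]
  have hM0 : (∑' n, g1 n 0) = 0 := by
    have h5 : ∀ n : ℕ, g1 n 0 = 0 := by
      intro n
      rcases n with _ | m
      · simp [g1]
      · simp [g1, zero_pow (by omega : 2*(m+1)-1 ≠ 0), zero_pow (by omega : 2*(m+1)+1 ≠ 0)]
    simp only [h5, tsum_zero]
  simp only [zero_div, Real.sin_zero, Real.cos_zero, hL0, hM0] at hEconst
  norm_num at hEconst
  have hDz : (∑' n, g n z) - cos (z/3) = 0 := by
    nlinarith [sq_nonneg ((∑' n, g1 n z) + sin (z/3) * (1/3)),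
      sq_nonneg ((∑' n, g n z) - cos (z/3))]
  have hfin : (∑' n, aa n * sin z ^ (2*n)) * cos z = ∑' n, g n z := tsum_mul_right.symm
  rw [hfin]
  linarith [hDz]


noncomputable def W (n : ℕ) : ℝ := ∏ i ∈ Finset.range n, (2*(i:ℝ)+1)/(2*(i:ℝ)+2)

lemma integral_sin_pow_half (n : ℕ) :
    ∫ x in (0:ℝ)..(π/2), sin x ^ (2*n) = π/2 * W n := by
  have hint : ∀ a b : ℝ, IntervalIntegrable (fun x => sin x ^ (2*n)) MeasureTheory.volume a b :=
    fun a b => (continuous_sin.pow _).intervalIntegrable a b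
  have hsplit : (∫ x in (0:ℝ)..π, sin x ^ (2*n))
      = (∫ x in (0:ℝ)..(π/2), sin x ^ (2*n)) + ∫ x in (π/2)..π, sin x ^ (2*n) := by
    rw [intervalIntegral.integral_add_adjacent_intervals (hint 0 (π/2)) (hint (π/2) π)]
  have hsym : (∫ x in (π/2)..π, sin x ^ (2*n)) = ∫ x in (0:ℝ)..(π/2), sin x ^ (2*n) := by
    have h2 := intervalIntegral.integral_comp_sub_left (a := (0:ℝ)) (b := π/2)
      (fun x => sin x ^ (2*n)) π
    have h3 : ∀ x : ℝ, sin (π - x) ^ (2*n) = sin x ^ (2*n) := fun x => by rw [sin_pi_sub]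
    simp only [h3] at h2
    rw [h2]
    have : π - π/2 = π/2 := by ring
    rw [this, sub_zero]
  have hfull : (∫ x in (0:ℝ)..π, sin x ^ (2*n)) = π * W n := by
    rw [W]; exact integral_sin_pow_even n
  rw [hsplit, hsym] at hfull
  linarith [hfull]

lemma W_eq (n : ℕ) : W n = (ascPochhammer ℝ n).eval (1/2) / (n.factorial : ℝ) := by
  induction n with
  | zero => simp [W]
  | succ m ih =>
    rw [W, Finset.prod_range_succ, ← W, ih, ascPochhammer_succ_eval, Nat.factorial_succ]
    have h1 : ((m.factorial : ℝ)) ≠ 0 := by positivity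
    have h2 : (2*(m:ℝ)+2) ≠ 0 := by positivity
    field_simp
    push_cast
    ring

noncomputable def bb (n : ℕ) : ℝ :=
  (ascPochhammer ℝ n).eval (1/3) * (ascPochhammer ℝ n).eval (2/3) /
    ((ascPochhammer ℝ n).eval 1 * (n.factorial : ℝ))

lemma aa_mul_W (n : ℕ) : aa n * W n = bb n := by
  rw [W_eq, aa, bb, ascPochhammer_eval_one]
  have h1 := (ascPochhammer_pos n ((1:ℝ)/2) (by norm_num)).ne'
  have h2 : ((n.factorial : ℝ)) ≠ 0 := by positivity
  field_simp


noncomputable def gmap (k : ℝ) (φ : ℝ) : ℝ := 2 * cos ((2/3) * arcsin (k * sin φ)) - 1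

noncomputable def gder (k : ℝ) (φ : ℝ) : ℝ :=
  -sin ((2/3) * arcsin (k * sin φ)) * ((2/3) * ((1 / √(1 - (k * sin φ)^2)) * (k * cos φ))) * 2

lemma hasDerivAt_gmap (k φ : ℝ) (h1 : k * sin φ ≠ -1) (h2 : k * sin φ ≠ 1) :
    HasDerivAt (gmap k) (gder k φ) φ := by
  have hs : HasDerivAt (fun ψ : ℝ => k * sin ψ) (k * cos φ) φ := by
    simpa [mul_comm] using (Real.hasDerivAt_sin φ).const_mul k
  have harc := (Real.hasDerivAt_arcsin h1 h2).comp φ hs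
  have hm := harc.const_mul ((2:ℝ)/3)
  have hcos := (Real.hasDerivAt_cos ((2/3) * arcsin (k * sin φ))).comp φ hm
  have hfin := (hcos.const_mul (2:ℝ)).sub_const 1
  have e : gmap k = fun ψ => 2 * ((cos ∘ fun ψ => (2/3) * ((arcsin ∘ fun ψ => k * sin ψ) ψ)) ψ) - 1 := by
    funext ψ; simp [gmap, Function.comp]
  rw [e]
  have hfin' : HasDerivAt (fun ψ => 2 * ((cos ∘ fun ψ => (2/3) * ((arcsin ∘ fun ψ => k * sin ψ) ψ)) ψ) - 1) _ φ := hfin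
  convert hfin' using 1
  simp only [Function.comp, gder]
  ring

lemma cos_eq_one_sub (x : ℝ) : cos x = 1 - 2 * sin (x/2)^2 := by
  have h2 : cos (2*(x/2)) = cos (x/2)^2 - sin (x/2)^2 := Real.cos_two_mul' (x/2)
  have h3 : (2:ℝ)*(x/2) = x := by ring
  rw [h3] at h2
  rw [h2, Real.cos_sq' (x/2)]
  ring

section main

variable {a : ℝ} (ha : 0 < a) (ha' : a < π/6)

include ha ha' in
lemma basic_facts : 0 < sin (3*a) ∧ sin (3*a) < 1 ∧ 3*a < π/2 := by
  have hpi := pi_pos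
  have h3a : 3*a < π/2 := by linarith
  refine ⟨sin_pos_of_pos_of_lt_pi (by linarith) (by linarith), ?_, h3a⟩
  have := strictMonoOn_sin (a := 3*a) (b := π/2) ⟨by linarith, h3a.le⟩
    ⟨by linarith, le_refl _⟩ h3a
  rwa [sin_pi_div_two] at this

include ha ha' in
lemma z_facts {φ : ℝ} (hφ : φ ∈ Set.Ioo (0:ℝ) (π/2)) :
    0 < arcsin (sin (3*a) * sin φ) ∧ arcsin (sin (3*a) * sin φ) < 3*a ∧
      sin (arcsin (sin (3*a) * sin φ)) = sin (3*a) * sin φ := by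
  obtain ⟨hk0, hk1, h3a⟩ := basic_facts ha ha'
  have hpi := pi_pos
  obtain ⟨hφ0, hφ2⟩ := hφ
  have hsφ0 : 0 < sin φ := sin_pos_of_pos_of_lt_pi hφ0 (by linarith)
  have hsφ1 : sin φ ≤ 1 := sin_le_one φ
  have hks : 0 < sin (3*a) * sin φ := mul_pos hk0 hsφ0
  have hks1 : sin (3*a) * sin φ ≤ sin (3*a) := by nlinarith
  refine ⟨arcsin_pos.mpr hks, ?_, sin_arcsin (by nlinarith) (by nlinarith)⟩
  have harc : arcsin (sin (3*a) * sin φ) ≤ arcsin (sin (3*a)) := by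
    apply strictMonoOn_arcsin.monotoneOn _ _ hks1
    · exact ⟨by nlinarith, by nlinarith⟩
    · exact ⟨by nlinarith, hk1.le⟩
  have heq : arcsin (sin (3*a)) = 3*a := arcsin_sin (by linarith) h3a.le
  rw [heq] at harc
  rcases lt_or_eq_of_le harc with h | h
  · exact h
  · exfalso
    have hs1 : sin φ < 1 := by
      have := strictMonoOn_sin (a := φ) (b := π/2) ⟨by linarith, hφ2.le⟩
        ⟨by linarith, le_refl _⟩ hφ2
      rwa [sin_pi_div_two] at this
    have h6 := sin_arcsin (x := sin (3*a) * sin φ) (by nlinarith) (by nlinarith)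
    rw [h] at h6
    nlinarith


include ha ha' in
lemma pointwise_eq {φ : ℝ} (hφ : φ ∈ Set.Ioo (0:ℝ) (π/2)) :
    |gder (sin (3*a)) φ| * (1 / √((1 - gmap (sin (3*a)) φ) *
      ((gmap (sin (3*a)) φ)^3 + 3*(gmap (sin (3*a)) φ)^2 - 4*cos (3*a)^2)))
      = ∑' n, (2/3) * (aa n * (sin (3*a) * sin φ)^(2*n)) := by
  obtain ⟨hk0, hk1, h3a⟩ := basic_facts ha ha'
  obtain ⟨hz0, hz3a, hsz⟩ := z_facts ha ha' hφ
  have hpi := pi_pos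
  set k := sin (3*a) with hkdef
  set z := arcsin (k * sin φ) with hzdef
  have hzπ2 : z < π/2 := by linarith
  have hcz : 0 < cos z := cos_pos_of_mem_Ioo ⟨by linarith, hzπ2⟩
  have hcφ : 0 < cos φ := cos_pos_of_mem_Ioo ⟨by linarith [hφ.1], hφ.2⟩
  have hsz3 : 0 < sin (z/3) := sin_pos_of_pos_of_lt_pi (by linarith) (by linarith)
  have hcz3 : 0 < cos (z/3) := cos_pos_of_mem_Ioo ⟨by linarith, by linarith⟩
  have A1 : 1 - gmap k φ = 4 * sin (z/3)^2 := by
    rw [gmap, ← hzdef]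
    have e : (2/3*z)/2 = z/3 := by ring
    rw [cos_eq_one_sub ((2/3)*z), e]
    ring
  have hc3 : cos (2*z) = 4 * cos ((2/3)*z)^3 - 3 * cos ((2/3)*z) := by
    have h := Real.cos_three_mul ((2/3)*z)
    have e2 : 3 * ((2/3)*z) = 2*z := by ring
    rwa [e2] at h
  have hc2z : cos (2*z) = 1 - 2 * sin z^2 := by
    have h := cos_eq_one_sub (2*z)
    have e : (2*z)/2 = z := by ring
    rwa [e] at h
  have hsz2 : sin z^2 = k^2 * sin φ^2 := by rw [hsz]; ring
  have hlam : cos (3*a)^2 = 1 - k^2 := by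
    have := sin_sq_add_cos_sq (3*a)
    rw [← hkdef] at this
    linarith
  have hsφ : sin φ^2 = 1 - cos φ^2 := sin_sq φ
  have A2 : (gmap k φ)^3 + 3*(gmap k φ)^2 - 4*cos (3*a)^2 = 4 * k^2 * cos φ^2 := by
    rw [gmap, ← hzdef]
    linear_combination (-2:ℝ)*hc3 + 2*hc2z + (-4:ℝ)*hsz2 + (-4:ℝ)*hlam + (-4*k^2)*hsφ
  have A3 : √((1 - gmap k φ) * ((gmap k φ)^3 + 3*(gmap k φ)^2 - 4*cos (3*a)^2))
      = 4*k*sin (z/3)*cos φ := by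
    rw [A1, A2]
    have e : 4 * sin (z/3)^2 * (4*k^2*cos φ^2) = (4*k*sin (z/3)*cos φ)^2 := by ring
    rw [e, Real.sqrt_sq (by positivity)]
  have hrt : √(1 - (k*sin φ)^2) = cos z := (Real.cos_arcsin _).symm
  have hsin23 : sin ((2/3)*z) = 2 * sin (z/3) * cos (z/3) := by
    have e : (2/3)*z = 2*(z/3) := by ring
    rw [e, sin_two_mul]
  have B : |gder k φ| = (8/3) * (sin (z/3)*cos (z/3)*k*cos φ/cos z) := by
    have hval : gder k φ = -((8/3) * (sin (z/3)*cos (z/3)*k*cos φ/cos z)) := by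
      rw [gder, ← hzdef, hrt, hsin23]
      field_simp
      ring
    rw [hval, abs_neg, abs_of_pos (by positivity)]
  rw [B, A3]
  have hD := series_val (z := z) hz0.le hzπ2
  have hsum : ∑' n, aa n * sin z ^ (2*n) = ∑' n, aa n * (k * sin φ)^(2*n) :=
    tsum_congr fun n => by rw [hsz]
  rw [hsum] at hD
  have hS : ∑' n, aa n * (k * sin φ)^(2*n) = cos (z/3) / cos z := by
    rw [eq_div_iff hcz.ne']; exact hD
  rw [tsum_mul_left, hS]
  field_simp
  ring


include ha ha' in
lemma strictAnti_gmap : StrictAntiOn (gmap (sin (3*a))) (Set.Icc 0 (π/2)) := by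
  obtain ⟨hk0, hk1, h3a⟩ := basic_facts ha ha'
  have hpi := pi_pos
  intro φ1 h1 φ2 h2 hlt
  simp only [Set.mem_Icc] at h1 h2
  have hs1 : 0 ≤ sin φ1 := sin_nonneg_of_nonneg_of_le_pi h1.1 (by linarith [h1.2])
  have hs2 : 0 ≤ sin φ2 := sin_nonneg_of_nonneg_of_le_pi h2.1 (by linarith [h2.2])
  have hs1' : sin φ1 ≤ 1 := sin_le_one _
  have hs2' : sin φ2 ≤ 1 := sin_le_one _
  have hmono : sin φ1 < sin φ2 :=
    strictMonoOn_sin ⟨by linarith [h1.1], by linarith [h1.2]⟩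
      ⟨by linarith [h2.1], by linarith [h2.2]⟩ hlt
  have harc : arcsin (sin (3*a) * sin φ1) < arcsin (sin (3*a) * sin φ2) := by
    apply strictMonoOn_arcsin ⟨by nlinarith, by nlinarith⟩ ⟨by nlinarith, by nlinarith⟩
    nlinarith
  have harc1 : 0 ≤ arcsin (sin (3*a) * sin φ1) := arcsin_nonneg.mpr (by nlinarith)
  have harc2 : arcsin (sin (3*a) * sin φ2) ≤ π/2 := arcsin_le_pi_div_two _
  have hcos : cos ((2/3) * arcsin (sin (3*a) * sin φ2))
      < cos ((2/3) * arcsin (sin (3*a) * sin φ1)) := by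
    apply strictAntiOn_cos ⟨by linarith, by linarith⟩ ⟨by linarith, by linarith⟩
    linarith
  rw [gmap, gmap]
  linarith

lemma gmap_zero (k : ℝ) : gmap k 0 = 1 := by
  simp [gmap]
  norm_num

include ha ha' in
lemma gmap_pi_div_two : gmap (sin (3*a)) (π/2) = 2 * cos (2*a) - 1 := by
  obtain ⟨hk0, hk1, h3a⟩ := basic_facts ha ha'
  rw [gmap, sin_pi_div_two, mul_one, arcsin_sin (by linarith [pi_pos]) h3a.le]
  have e : (2:ℝ)/3 * (3*a) = 2*a := by ring
  rw [e]

lemma continuous_gmap (k : ℝ) : Continuous (gmap k) := by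
  apply Continuous.sub _ continuous_const
  apply Continuous.mul continuous_const
  exact Real.continuous_cos.comp (Continuous.mul continuous_const
    (Real.continuous_arcsin.comp (Continuous.mul continuous_const Real.continuous_sin)))

include ha ha' in
lemma image_gmap : gmap (sin (3*a)) '' (Set.Ioo 0 (π/2)) = Set.Ioo (2*cos (2*a)-1) 1 := by
  have hpi := pi_pos
  apply Set.Subset.antisymm
  · rintro y ⟨φ, hφ, rfl⟩
    have h1 : gmap (sin (3*a)) φ < gmap (sin (3*a)) 0 :=
      strictAnti_gmap ha ha' ⟨le_refl _, by linarith⟩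
        ⟨hφ.1.le, hφ.2.le⟩ hφ.1
    have h2 : gmap (sin (3*a)) (π/2) < gmap (sin (3*a)) φ :=
      strictAnti_gmap ha ha' ⟨hφ.1.le, hφ.2.le⟩
        ⟨by linarith, le_refl _⟩ hφ.2
    rw [gmap_zero] at h1
    rw [gmap_pi_div_two ha ha'] at h2
    exact ⟨h2, h1⟩
  · have h := intermediate_value_Ioo' (a := (0:ℝ)) (b := π/2) (by linarith)
      ((continuous_gmap (sin (3*a))).continuousOn)
    rw [gmap_zero, gmap_pi_div_two ha ha'] at h
    exact h


include ha ha' in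
lemma main_calc :
    ∫ x in (2*cos (2*a)-1)..1, 1 / √((1 - x) * (x^3 + 3*x^2 - 4*cos (3*a)^2))
      = (π/3) * ∑' n, bb n * ((sin (3*a))^2)^n := by
  obtain ⟨hk0, hk1, h3a⟩ := basic_facts ha ha'
  have hpi := pi_pos
  set k := sin (3*a) with hkdef
  have hx1lt : 2*cos (2*a)-1 < 1 := by
    have : cos (2*a) < cos 0 := strictAntiOn_cos ⟨le_refl _, pi_pos.le⟩
      ⟨by linarith, by linarith⟩ (by linarith)
    rw [cos_zero] at this
    linarith
  have hfmeas : ∀ φ ∈ Set.Ioo (0:ℝ) (π/2), HasDerivWithinAt (gmap k) (gder k φ)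
      (Set.Ioo (0:ℝ) (π/2)) φ := by
    intro φ hφ
    have hsφ : 0 < sin φ := sin_pos_of_pos_of_lt_pi hφ.1 (by linarith [hφ.2])
    have hsφ1 : sin φ ≤ 1 := sin_le_one φ
    exact (hasDerivAt_gmap k φ (by nlinarith) (by nlinarith)).hasDerivWithinAt
  have hinj : Set.InjOn (gmap k) (Set.Ioo (0:ℝ) (π/2)) :=
    ((strictAnti_gmap ha ha').mono (fun w hw => ⟨hw.1.le, hw.2.le⟩)).injOn
  have step1 : (∫ x in (2*cos (2*a)-1)..1, 1 / √((1 - x) * (x^3 + 3*x^2 - 4*cos (3*a)^2)))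
      = ∫ x in Set.Ioo (2*cos (2*a)-1) 1, 1 / √((1 - x) * (x^3 + 3*x^2 - 4*cos (3*a)^2)) := by
    rw [intervalIntegral.integral_of_le hx1lt.le, MeasureTheory.integral_Ioc_eq_integral_Ioo]
  have step2 := MeasureTheory.integral_image_eq_integral_abs_deriv_smul measurableSet_Ioo
    hfmeas hinj (fun x => 1 / √((1 - x) * (x^3 + 3*x^2 - 4*cos (3*a)^2)))
  rw [image_gmap ha ha'] at step2
  have step3 : ∫ φ in Set.Ioo (0:ℝ) (π/2), |gder k φ| •
      (1 / √((1 - gmap k φ) * ((gmap k φ)^3 + 3*(gmap k φ)^2 - 4*cos (3*a)^2)))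
      = ∫ φ in Set.Ioo (0:ℝ) (π/2), ∑' n, (2/3) * (aa n * (k * sin φ)^(2*n)) := by
    apply MeasureTheory.setIntegral_congr_fun measurableSet_Ioo
    intro φ hφ
    simp only [smul_eq_mul]
    exact pointwise_eq ha ha' hφ
  have step4 : (∫ φ in Set.Ioo (0:ℝ) (π/2), ∑' n, (2/3) * (aa n * (k * sin φ)^(2*n)))
      = ∫ φ in (0:ℝ)..(π/2), ∑' n, (2/3) * (aa n * (k * sin φ)^(2*n)) := by
    rw [intervalIntegral.integral_of_le (by linarith), MeasureTheory.integral_Ioc_eq_integral_Ioo]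
  -- summability of the bound
  have hksq : k^2 < 1 := by nlinarith
  have hgeo : Summable (fun n : ℕ => (2/3) * (k^2)^n) :=
    (summable_geometric_of_lt_one (by positivity) hksq).mul_left _
  have hbsum : Summable (fun n : ℕ => (2/3) * (aa n * k^(2*n))) := by
    apply Summable.of_nonneg_of_le
      (fun n => mul_nonneg (by norm_num) (mul_nonneg (aa_pos n).le (pow_nonneg hk0.le _)))
      (fun n => ?_) hgeo
    rw [← pow_mul]
    nlinarith [aa_le_one n, aa_pos n, pow_nonneg hk0.le (2*n)]
  have hterm_bound : ∀ n : ℕ, ∀ t : ℝ, ‖(2/3) * (aa n * (k * sin t)^(2*n))‖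
      ≤ (2/3) * (aa n * k^(2*n)) := by
    intro n t
    rw [Real.norm_eq_abs, abs_mul, abs_mul, abs_pow, abs_mul]
    have h1 : |k| * |sin t| ≤ k := by
      rw [abs_of_pos hk0]
      nlinarith [abs_sin_le_one t, abs_nonneg (sin t), hk0.le]
    have h2 : (|k| * |sin t|)^(2*n) ≤ k^(2*n) :=
      pow_le_pow_left₀ (by positivity) h1 _
    have h3 : |aa n| = aa n := abs_of_pos (aa_pos n)
    rw [h3]
    have : |(2:ℝ)/3| = 2/3 := by norm_num
    rw [this]
    nlinarith [aa_pos n, pow_nonneg (mul_nonneg (abs_nonneg k) (abs_nonneg (sin t))) (2*n)]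
  have hsummable_at : ∀ t : ℝ, Summable (fun n => (2/3) * (aa n * (k * sin t)^(2*n))) := by
    intro t
    apply Summable.of_norm_bounded hbsum (hterm_bound · t)
  have hHasSum := intervalIntegral.hasSum_integral_of_dominated_convergence
    (μ := MeasureTheory.volume) (a := (0:ℝ)) (b := π/2)
    (F := fun n t => (2/3) * (aa n * (k * sin t)^(2*n)))
    (f := fun t => ∑' n, (2/3) * (aa n * (k * sin t)^(2*n)))
    (bound := fun n _ => (2/3) * (aa n * k^(2*n)))
    (fun n => (Continuous.aestronglyMeasurable (by fun_prop)))
    (fun n => MeasureTheory.ae_of_all _ (fun t _ => hterm_bound n t))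
    (MeasureTheory.ae_of_all _ (fun t _ => hbsum))
    (intervalIntegrable_const)
    (MeasureTheory.ae_of_all _ (fun t _ => (hsummable_at t).hasSum))
  -- compute each integral
  have hint_n : ∀ n : ℕ, (∫ t in (0:ℝ)..(π/2), (2/3) * (aa n * (k * sin t)^(2*n)))
      = (π/3) * (bb n * (k^2)^n) := by
    intro n
    have e : ∀ t : ℝ, (2/3) * (aa n * (k * sin t)^(2*n))
        = ((2/3) * aa n * k^(2*n)) * sin t ^ (2*n) := by
      intro t; rw [mul_pow]; ring
    simp only [e]
    rw [intervalIntegral.integral_const_mul, integral_sin_pow_half]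
    rw [← aa_mul_W n, ← pow_mul]
    ring
  simp only [hint_n] at hHasSum
  rw [step1, step2, step3, step4, ← hHasSum.tsum_eq, tsum_mul_left]
end main

end S13

theorem stmt_13 (a κ lam x₁ : ℝ) (ha : 0 < a) (ha' : a < π / 6)
    (hκ : κ = sin (3 * a)) (hlam : lam = cos (3 * a))
    (hx₁ : x₁ = 2 * cos (2 * a) - 1) :
    ∫ x in x₁..1, 1 / Real.sqrt ((1 - x) * (x ^ 3 + 3 * x ^ 2 - 4 * lam ^ 2)) =
      (π / 3) * hyperF (1/3) (2/3) 1 (κ ^ 2) := by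
  subst hκ hlam hx₁
  have h := S13.main_calc ha ha'
  have e : hyperF (1/3) (2/3) 1 (sin (3*a) ^ 2) = ∑' n, S13.bb n * ((sin (3*a))^2)^n := rfl
  rw [e]
  exact h
end

section
/- Let p be a real number with 0 < p < 1, and consider the equation S(3 − 4S)² = 27p²(1 + p)² / (4(1 + p + p²)³) in a real unknown S. Then S = 3/(4(1 + p + p²)), S = 3p²/(4(1 + p + p²)), and S = 3(1 + p)²/(4(1 + p + p²)) are all solutions; moreover, for S in the interval (0, 1/4), the equation holds if and only if S = 3p²/(4(1 + p + p²)). -/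
theorem stmt_16 (p : ℝ) (hp : 0 < p) (hp' : p < 1) :
    ((3 / (4 * (1 + p + p ^ 2))) * (3 - 4 * (3 / (4 * (1 + p + p ^ 2)))) ^ 2 =
        27 * p ^ 2 * (1 + p) ^ 2 / (4 * (1 + p + p ^ 2) ^ 3)) ∧
    ((3 * p ^ 2 / (4 * (1 + p + p ^ 2))) *
        (3 - 4 * (3 * p ^ 2 / (4 * (1 + p + p ^ 2)))) ^ 2 =
        27 * p ^ 2 * (1 + p) ^ 2 / (4 * (1 + p + p ^ 2) ^ 3)) ∧
    ((3 * (1 + p) ^ 2 / (4 * (1 + p + p ^ 2))) *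
        (3 - 4 * (3 * (1 + p) ^ 2 / (4 * (1 + p + p ^ 2)))) ^ 2 =
        27 * p ^ 2 * (1 + p) ^ 2 / (4 * (1 + p + p ^ 2) ^ 3)) ∧
    (∀ S : ℝ, S ∈ Set.Ioo (0 : ℝ) (1/4) →
      (S * (3 - 4 * S) ^ 2 = 27 * p ^ 2 * (1 + p) ^ 2 / (4 * (1 + p + p ^ 2) ^ 3) ↔
        S = 3 * p ^ 2 / (4 * (1 + p + p ^ 2)))) := by
  have hQ : (0 : ℝ) < 1 + p + p ^ 2 := by positivity
  have hQ3 : 1 + p + p ^ 2 < 3 := by nlinarith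
  have hQne : (1 + p + p ^ 2) ≠ 0 := ne_of_gt hQ
  refine ⟨by field_simp; ring, by field_simp; ring, by field_simp; ring, ?_⟩
  rintro S ⟨hS0, hS4⟩
  set Q := 1 + p + p ^ 2 with hQdef
  constructor
  · intro h
    have heq : 4 * Q ^ 3 * (S * (3 - 4 * S) ^ 2) = 27 * p ^ 2 * (1 + p) ^ 2 := by
      rw [h]; field_simp
    have hfac : (4 * Q * S - 3) * (4 * Q * S - 3 * p ^ 2) *
        (4 * Q * S - 3 * (1 + p) ^ 2) = 0 := by
      simp only [hQdef] at heq ⊢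
      linear_combination heq
    have hlt : 4 * Q * S < Q := by nlinarith
    have h1 : 4 * Q * S - 3 ≠ 0 := by intro h; nlinarith
    have h3 : 4 * Q * S - 3 * (1 + p) ^ 2 ≠ 0 := by intro h; nlinarith
    have h2 : 4 * Q * S - 3 * p ^ 2 = 0 := by
      rcases mul_eq_zero.mp hfac with h | h
      · rcases mul_eq_zero.mp h with h | h
        · exact absurd h h1
        · exact h
      · exact absurd h h3
    field_simp
    linarith
  · intro h
    subst h
    field_simp
    ring
end

section
/- Let p be a real number with 0 < p < 1 and let a be a real number with 0 < a < π/6 and sin(a) = (√3/2) · p/√(1 + p + p²). Then 8√3 · cos²(a + π/6) · cos(2a − π/6) = 9(1 + 2p)/(1 + p + p²)². -/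
open Real

theorem stmt_18 (p a : ℝ) (hp : 0 < p) (hp' : p < 1)
    (ha : 0 < a) (ha' : a < π / 6)
    (hsin : sin a = (Real.sqrt 3 / 2) * (p / Real.sqrt (1 + p + p ^ 2))) :
    8 * Real.sqrt 3 * cos (a + π / 6) ^ 2 * cos (2 * a - π / 6) =
      9 * (1 + 2 * p) / (1 + p + p ^ 2) ^ 2 := by
  have hQpos : (0:ℝ) < 1 + p + p ^ 2 := by nlinarith
  set Q := Real.sqrt (1 + p + p ^ 2) with hQdef
  have hQ : 0 < Q := Real.sqrt_pos.mpr hQpos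
  have hQsq : Q ^ 2 = 1 + p + p ^ 2 := Real.sq_sqrt hQpos.le
  have h3 : Real.sqrt 3 ^ 2 = 3 := Real.sq_sqrt (by norm_num)
  have h3pos : (0:ℝ) < Real.sqrt 3 := Real.sqrt_pos.mpr (by norm_num)
  have hcosnn : 0 ≤ cos a := by
    apply Real.cos_nonneg_of_mem_Icc
    constructor
    · linarith [Real.pi_pos]
    · nlinarith [Real.pi_pos]
  have hcossq : cos a ^ 2 = ((2 + p) / (2 * Q)) ^ 2 := by
    have h1 : cos a ^ 2 = 1 - sin a ^ 2 := by
      have := sin_sq_add_cos_sq a; linarith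
    rw [h1, hsin]
    field_simp
    nlinarith [hQsq, h3]
  have hcos : cos a = (2 + p) / (2 * Q) := by
    have hrhs : 0 ≤ (2 + p) / (2 * Q) := by positivity
    nlinarith [hcossq, hcosnn, hrhs]
  have h1 : cos (a + π / 6) = Real.sqrt 3 / (2 * Q) := by
    rw [cos_add, cos_pi_div_six, sin_pi_div_six, hsin, hcos]
    field_simp
    ring
  have hA : cos (a + π / 6) ^ 2 = 3 / (4 * (1 + p + p ^ 2)) := by
    rw [h1, div_pow, mul_pow, h3, hQsq]
    norm_num
  have hc2 : cos a ^ 2 = (2 + p) ^ 2 / (4 * (1 + p + p ^ 2)) := by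
    rw [hcossq, div_pow, mul_pow, hQsq]
    norm_num
  have hQQ : Q * (2 * Q) = 2 * (1 + p + p ^ 2) := by
    rw [← hQsq]; ring
  have hsc : sin a * cos a = Real.sqrt 3 * (p * (2 + p)) / (4 * (1 + p + p ^ 2)) := by
    rw [hsin, hcos]
    rw [show Real.sqrt 3 / 2 * (p / Q) * ((2 + p) / (2 * Q))
        = Real.sqrt 3 / 2 * ((p * (2 + p)) / (Q * (2 * Q))) by ring]
    rw [hQQ]
    field_simp
    ring
  have hB : cos (2 * a - π / 6) = Real.sqrt 3 * (1 + 2 * p) / (2 * (1 + p + p ^ 2)) := by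
    have hsc' : 4 * (1 + p + p ^ 2) * (sin a * cos a) = Real.sqrt 3 * (p * (2 + p)) := by
      rw [hsc]; field_simp
    rw [cos_sub, cos_pi_div_six, sin_pi_div_six, cos_two_mul, sin_two_mul, hc2]
    field_simp
    linear_combination 2 * hsc'
  rw [hA, hB]
  field_simp
  linear_combination 24 * h3
end
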